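/- arXiv:2410.10195 — 4 statements merged into one kernel-verified Lean document; each statement's English description precedes it below -/
import Mathlib

section
/- Let d ≥ 1, Ω ⊂ ℝ^d open and bounded, δt > 0, λ, ε > 0, α ≠ 0, s, r*, Q*, r^{n+1}, r^n, r^{n−1} ∈ ℝ, M : ℝ → ℝ smooth. Let φ^{n+1}, φ^n, φ^{n−1}, φ*, μ^{n+1} : ℝ^d → ℝ and u* : ℝ^d → ℝ^d be smooth with supports contained in a fixed compact subset of Ω. Assume pointwise on ℝ^d: (3φ^{n+1} − 4φ^n + φ^{n−1})/(2δt) + Q* ∇·(u* φ*) = ∇·(M(φ*) ∇μ^{n+1}) and μ^{n+1} = λ(−ε Δφ^{n+1} + (s/ε)φ^{n+1} + (r*/ε)(f(φ*) − sφ*)); and assume the scalar update 3r^{n+1} − 4r^n + r^{n−1} = α( −(3E₀^{n+1} − 4E₀^n + E₀^{n−1}) + (r*λ/ε)∫_Ω (f(φ*) − sφ*)(3φ^{n+1} − 4φ^n + φ^{n−1}) dx ), where E₀^k = (λ/ε)∫_Ω (F(φ^k) − (s/2)(φ^k)²) dx. Then (λε/2)(‖∇φ^{n+1}‖² − ‖∇φ^n‖²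 + ‖2∇φ^{n+1} − ∇φ^n‖² − ‖2∇φ^n − ∇φ^{n−1}‖² + ‖∇φ^{n+1} − 2∇φ^n + ∇φ^{n−1}‖²) + (λs/(2ε))(‖φ^{n+1}‖² − ‖φ^n‖² + ‖2φ^{n+1} − φ^n‖² − ‖2φ^n − φ^{n−1}‖² + ‖φ^{n+1} − 2φ^n + φ^{n−1}‖²) + (1/α)(3r^{n+1} − 4r^n + r^{n−1}) + (3E₀^{n+1} − 4E₀^n + E₀^{n−1}) = −2δt ∫_Ω M(φ*)|∇μ^{n+1}|² dx − 2δt Q* ∫_Ω ∇·(u* φ*) μ^{n+1} dx. -/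
open MeasureTheory

noncomputable section

/-- Gradient of a scalar field on `ℝ^d`. -/
def grad {d : ℕ} (f : (Fin d → ℝ) → ℝ) (x : Fin d → ℝ) : Fin d → ℝ :=
  fun i => fderiv ℝ f x (Pi.single i 1)

/-- Divergence `∇·v` of a vector field on `ℝ^d`. -/
def vdiv {d : ℕ} (v : (Fin d → ℝ) → (Fin d → ℝ)) (x : Fin d → ℝ) : ℝ :=
  ∑ i, fderiv ℝ (fun y => v y i) x (Pi.single i 1)

/-- Euclidean inner product on `ℝ^d`. -/
def dot {d : ℕ} (v w : Fin d → ℝ) : ℝ := ∑ i, v i * w i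

/-- Directional derivative `((v·∇)w)(x)`: derivative of `w` at `x` in direction `v x`. -/
def dirD {d : ℕ} (v w : (Fin d → ℝ) → (Fin d → ℝ)) (x : Fin d → ℝ) : Fin d → ℝ :=
  fun i => fderiv ℝ (fun y => w y i) x (v x)

/-- Laplacian of a scalar field. -/
def lap {d : ℕ} (f : (Fin d → ℝ) → ℝ) (x : Fin d → ℝ) : ℝ := vdiv (grad f) x

/-- Strain tensor `D(u) = ∇u + ∇uᵀ`. -/
def strain {d : ℕ} (u : (Fin d → ℝ) → (Fin d → ℝ)) (x : Fin d → ℝ) (i j : Fin d) : ℝ :=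
  fderiv ℝ (fun y => u y i) x (Pi.single j 1) + fderiv ℝ (fun y => u y j) x (Pi.single i 1)

/-- Squared Frobenius norm `|D(u)|²` of the strain tensor. -/
def strainSq {d : ℕ} (u : (Fin d → ℝ) → (Fin d → ℝ)) (x : Fin d → ℝ) : ℝ :=
  ∑ i, ∑ j, (strain u x i j) ^ 2

/-- Row-wise divergence `∇·(ν D(u))`. -/
def divStrain {d : ℕ} (ν : (Fin d → ℝ) → ℝ) (u : (Fin d → ℝ) → (Fin d → ℝ))
    (x : Fin d → ℝ) : Fin d → ℝ :=
  fun i => ∑ j, fderiv ℝ (fun y => ν y * strain u y i j) x (Pi.single j 1)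

/-- Squared `L²(Ω)` norm of a scalar field. -/
def l2sq {d : ℕ} (Ω : Set (Fin d → ℝ)) (g : (Fin d → ℝ) → ℝ) : ℝ := ∫ x in Ω, (g x) ^ 2

/-- Squared `L²(Ω)` norm of a vector field. -/
def l2vsq {d : ℕ} (Ω : Set (Fin d → ℝ)) (v : (Fin d → ℝ) → (Fin d → ℝ)) : ℝ :=
  ∫ x in Ω, dot (v x) (v x)

/-- The auxiliary energy `E₀(ψ) = (λ/ε) ∫_Ω (F(ψ) - (s/2)ψ²)`. -/
def E0val {d : ℕ} (Ω : Set (Fin d → ℝ)) (lam ε s : ℝ) (ψ : (Fin d → ℝ) → ℝ) : ℝ :=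
  (lam / ε) * ∫ x in Ω, ((1 / 4) * ((ψ x) ^ 2 - 1) ^ 2 - (s / 2) * (ψ x) ^ 2)

section Helpers

open Function Metric

variable {d : ℕ}

lemma topp : ((⊤:ℕ∞) : WithTop ℕ∞) + 1 ≤ ((⊤:ℕ∞) : WithTop ℕ∞) := by exact_mod_cast le_top

lemma onep : ((⊤:ℕ∞) : WithTop ℕ∞) ≠ 0 := by simp

lemma comp_contDiff {W : (Fin d → ℝ) → (Fin d → ℝ)} (hW : ContDiff ℝ (⊤:ℕ∞) W) (i : Fin d) :
    ContDiff ℝ (⊤:ℕ∞) fun y => W y i := contDiff_pi.mp hW i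

lemma contDiff_grad {f : (Fin d → ℝ) → ℝ} (hf : ContDiff ℝ (⊤:ℕ∞) f) :
    ContDiff ℝ (⊤:ℕ∞) (grad f) :=
  contDiff_pi.mpr fun i => ((hf.fderiv_right topp).clm_apply contDiff_const)

lemma continuous_vdiv {W : (Fin d → ℝ) → (Fin d → ℝ)} (hW : ContDiff ℝ (⊤:ℕ∞) W) :
    Continuous (vdiv W) := by
  have h : ∀ i : Fin d, Continuous fun x => fderiv ℝ (fun y => W y i) x (Pi.single i 1) :=
    fun i => (((comp_contDiff hW i).fderiv_right topp).clm_apply contDiff_const).continuous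
  exact continuous_finset_sum _ fun i _ => h i

lemma continuous_dot {v w : (Fin d → ℝ) → (Fin d → ℝ)} (hv : Continuous v) (hw : Continuous w) :
    Continuous fun x => dot (v x) (w x) :=
  continuous_finset_sum _ fun i _ => ((continuous_apply i).comp hv).mul ((continuous_apply i).comp hw)

lemma grad_eq_zero_of_nmem {f : (Fin d → ℝ) → ℝ} {x} (hx : x ∉ tsupport f) :
    grad f x = 0 := by
  have h : fderiv ℝ f x = 0 := by
    by_contra h
    exact hx (support_fderiv_subset ℝ (Function.mem_support.mpr h))
  funext i
  simp [grad, h]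

lemma tsupport_comp_subset' {W : (Fin d → ℝ) → (Fin d → ℝ)} (i : Fin d) :
    tsupport (fun y => W y i) ⊆ tsupport W :=
  closure_mono fun y hy h0 => hy (by simp [h0])

lemma vdiv_eq_zero_of_nmem {W : (Fin d → ℝ) → (Fin d → ℝ)} {x} (hx : x ∉ tsupport W) :
    vdiv W x = 0 := by
  rw [vdiv]
  refine Finset.sum_eq_zero fun i _ => ?_
  have h : fderiv ℝ (fun y => W y i) x = 0 := by
    by_contra h
    exact hx (tsupport_comp_subset' i (support_fderiv_subset ℝ (Function.mem_support.mpr h)))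
  simp [h]

lemma vdiv_mul {g : (Fin d → ℝ) → ℝ} {V : (Fin d → ℝ) → (Fin d → ℝ)}
    (hg : ContDiff ℝ (⊤:ℕ∞) g) (hV : ContDiff ℝ (⊤:ℕ∞) V) (x : Fin d → ℝ) :
    vdiv (fun y i => g y * V y i) x = dot (grad g x) (V x) + g x * vdiv V x := by
  have hgd : DifferentiableAt ℝ g x := (hg.differentiable onep) x
  have key : ∀ i : Fin d, fderiv ℝ (fun y => g y * V y i) x (Pi.single i 1)
      = grad g x i * V x i + g x * fderiv ℝ (fun y => V y i) x (Pi.single i 1) := by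
    intro i
    have hVd : DifferentiableAt ℝ (fun y => V y i) x := ((comp_contDiff hV i).differentiable onep) x
    rw [fderiv_fun_mul hgd hVd]
    simp [grad]
    ring
  simp only [vdiv, key, dot]
  rw [Finset.sum_add_distrib, Finset.mul_sum]

lemma integral_vdiv_eq_zero {n : ℕ} {W : (Fin (n+1) → ℝ) → (Fin (n+1) → ℝ)}
    (hW : ContDiff ℝ (⊤:ℕ∞) W) (hsupp : HasCompactSupport W) :
    ∫ x, vdiv W x = 0 := by
  obtain ⟨R₀, hR₀⟩ := hsupp.isBounded.subset_closedBall 0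
  set R : ℝ := max R₀ 0 + 1 with hRdef
  have hRpos : (0:ℝ) < R := by positivity
  have hsub : ∀ x ∈ tsupport W, ‖x‖ < R := by
    intro x hx
    have h1 : ‖x‖ ≤ R₀ := by simpa [mem_closedBall_zero_iff] using hR₀ hx
    have h2 : R₀ ≤ max R₀ 0 := le_max_left _ _
    linarith
  have hW0 : ∀ x : Fin (n+1) → ℝ, ¬ ‖x‖ < R → W x = 0 := fun x hx =>
    image_eq_zero_of_notMem_tsupport fun hmem => hx (hsub x hmem)
  set a : Fin (n+1) → ℝ := fun _ => -R with ha
  set b : Fin (n+1) → ℝ := fun _ => R with hb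
  have hle : a ≤ b := fun i => by simp [ha, hb]; linarith
  have hdiff : Differentiable ℝ W := hW.differentiable onep
  have hfd : ∀ (x : Fin (n+1) → ℝ) (i : Fin (n+1)),
      fderiv ℝ W x (Pi.single i 1) i = fderiv ℝ (fun y => W y i) x (Pi.single i 1) := by
    intro x i
    have h1 : HasFDerivAt (fun y => W y i)
        ((ContinuousLinearMap.proj (R := ℝ) (φ := fun _ : Fin (n+1) => ℝ) i).comp
          (fderiv ℝ W x)) x :=
      (ContinuousLinearMap.hasFDerivAt
        (f := ContinuousLinearMap.proj (R := ℝ) (φ := fun _ : Fin (n+1) => ℝ) i)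
        (x := W x)).comp x (hdiff x).hasFDerivAt
    rw [h1.fderiv]
    rfl
  have hcontdiv : Continuous fun x : Fin (n+1) → ℝ => ∑ i, fderiv ℝ W x (Pi.single i 1) i := by
    refine continuous_finset_sum _ fun i _ => ?_
    exact (continuous_apply i).comp
      (((hW.fderiv_right topp).clm_apply contDiff_const).continuous)
  have key := MeasureTheory.integral_divergence_of_hasFDerivAt_off_countable a b hle W
      (fun x => fderiv ℝ W x) ∅ Set.countable_empty
      hdiff.continuous.continuousOn
      (fun x _ => (hdiff x).hasFDerivAt)
      ((hcontdiv.continuousOn).integrableOn_compact isCompact_Icc)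
  have hface : ∀ (i : Fin (n+1)) (c : ℝ), |c| = R →
      ∀ x : Fin n → ℝ, W (Fin.insertNth (α := fun _ => ℝ) i c x) i = 0 := by
    intro i c hc x
    have h1 : ¬ ‖Fin.insertNth (α := fun _ => ℝ) i c x‖ < R := by
      have h2 := norm_le_pi_norm (Fin.insertNth (α := fun _ => ℝ) i c x) i
      rw [Fin.insertNth_apply_same] at h2
      rw [Real.norm_eq_abs, hc] at h2
      linarith
    rw [hW0 _ h1]
    rfl
  have hsum0 : (∑ i : Fin (n+1),
      ((∫ x in Set.Icc (a ∘ i.succAbove) (b ∘ i.succAbove),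
          W (Fin.insertNth (α := fun _ => ℝ) i (b i) x) i) -
        ∫ x in Set.Icc (a ∘ i.succAbove) (b ∘ i.succAbove),
          W (Fin.insertNth (α := fun _ => ℝ) i (a i) x) i)) = 0 := by
    refine Finset.sum_eq_zero fun i _ => ?_
    rw [setIntegral_eq_zero_of_forall_eq_zero
        (fun x _ => hface i (b i) (by simp [hb, abs_of_pos hRpos]) x),
      setIntegral_eq_zero_of_forall_eq_zero
        (fun x _ => hface i (a i) (by simp [ha, abs_of_pos hRpos]) x), sub_zero]
  rw [hsum0] at key
  have h2 : ∀ x : Fin (n+1) → ℝ, (∑ i, fderiv ℝ W x (Pi.single i 1) i) = vdiv W x := fun x =>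
    Finset.sum_congr rfl fun i _ => hfd x i
  simp only [h2] at key
  have hvanish : ∀ x : Fin (n+1) → ℝ, x ∉ Set.Icc a b → vdiv W x = 0 := by
    intro x hx
    refine vdiv_eq_zero_of_nmem fun hmem => hx ?_
    have hn := hsub x hmem
    constructor <;> intro i <;>
      have hi := (abs_le.mp ((norm_le_pi_norm x i).trans hn.le)) <;>
      simp only [ha, hb] <;> [linarith [hi.1]; linarith [hi.2]]
  rw [← setIntegral_eq_integral_of_forall_compl_eq_zero hvanish]
  exact key


lemma integral_ibp {n : ℕ} {g : (Fin (n+1) → ℝ) → ℝ} {V : (Fin (n+1) → ℝ) → (Fin (n+1) → ℝ)}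
    (hg : ContDiff ℝ (⊤:ℕ∞) g) (hV : ContDiff ℝ (⊤:ℕ∞) V) (hgs : HasCompactSupport g) :
    ∫ x, g x * vdiv V x = - ∫ x, dot (grad g x) (V x) := by
  have hWc : ContDiff ℝ (⊤:ℕ∞) (fun y i => g y * V y i) :=
    contDiff_pi.mpr fun i => hg.mul (comp_contDiff hV i)
  have hWs : HasCompactSupport (fun y (i : Fin (n+1)) => g y * V y i) := by
    refine HasCompactSupport.intro hgs fun x hx => ?_
    have h0 : g x = 0 := image_eq_zero_of_notMem_tsupport hx
    funext i
    simp [h0]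
  have h0 : ∫ x, vdiv (fun y i => g y * V y i) x = 0 := integral_vdiv_eq_zero hWc hWs
  have hre : (fun x => vdiv (fun y i => g y * V y i) x)
      = fun x => dot (grad g x) (V x) + g x * vdiv V x := funext (vdiv_mul hg hV)
  have hi1 : Integrable (fun x => dot (grad g x) (V x)) := by
    refine Continuous.integrable_of_hasCompactSupport
      (continuous_dot (contDiff_grad hg).continuous hV.continuous) ?_
    refine HasCompactSupport.intro hgs fun x hx => ?_
    rw [show grad g x = 0 from grad_eq_zero_of_nmem hx]
    simp [dot]
  have hi2 : Integrable (fun x => g x * vdiv V x) := by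
    refine Continuous.integrable_of_hasCompactSupport
      (hg.continuous.mul (continuous_vdiv hV)) ?_
    exact HasCompactSupport.intro hgs fun x hx => by
      simp [image_eq_zero_of_notMem_tsupport hx]
  rw [hre, integral_add hi1 hi2] at h0
  linarith

lemma integrable_of_support {d : ℕ} {f : (Fin d → ℝ) → ℝ} {K : Set (Fin d → ℝ)}
    (hK : IsCompact K) (hc : Continuous f) (hs : ∀ x ∉ K, f x = 0) : Integrable f :=
  hc.integrable_of_hasCompactSupport (HasCompactSupport.intro hK hs)

lemma setInt_eq {d : ℕ} {Ω K : Set (Fin d → ℝ)} (hKΩ : K ⊆ Ω) {f : (Fin d → ℝ) → ℝ}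
    (hs : ∀ x ∉ K, f x = 0) : ∫ x in Ω, f x = ∫ x, f x :=
  setIntegral_eq_integral_of_forall_compl_eq_zero fun x hx => hs x fun h => hx (hKΩ h)

lemma dot_bdf2 {m : ℕ} (a b c : Fin m → ℝ) :
    dot a a - dot b b + dot (fun i => 2*a i - b i) (fun i => 2*a i - b i)
      - dot (fun i => 2*b i - c i) (fun i => 2*b i - c i)
      + dot (fun i => a i - 2*b i + c i) (fun i => a i - 2*b i + c i)
    = 2 * dot a (fun i => 3*a i - 4*b i + c i) := by
  simp only [dot, Finset.mul_sum, ← Finset.sum_sub_distrib, ← Finset.sum_add_distrib]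
  exact Finset.sum_congr rfl fun i _ => by ring

end Helpers

theorem stmt9 {d : ℕ} (hd : 1 ≤ d) (Ω : Set (Fin d → ℝ)) (hΩo : IsOpen Ω)
    (hΩb : Bornology.IsBounded Ω)
    (δt lam ε : ℝ) (hδt : 0 < δt) (hlam : 0 < lam) (hε : 0 < ε)
    (α : ℝ) (hα : α ≠ 0) (s rs Qs r1 r0 rm : ℝ)
    (M : ℝ → ℝ) (hM : ContDiff ℝ (⊤ : ℕ∞) M)
    (φ1 φ0 φm φs μ1 : (Fin d → ℝ) → ℝ) (us : (Fin d → ℝ) → (Fin d → ℝ))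
    (hφ1 : ContDiff ℝ (⊤ : ℕ∞) φ1) (hφ0 : ContDiff ℝ (⊤ : ℕ∞) φ0)
    (hφm : ContDiff ℝ (⊤ : ℕ∞) φm) (hφs : ContDiff ℝ (⊤ : ℕ∞) φs)
    (hμ1 : ContDiff ℝ (⊤ : ℕ∞) μ1) (hus : ContDiff ℝ (⊤ : ℕ∞) us)
    (Kc : Set (Fin d → ℝ)) (hKc : IsCompact Kc) (hKΩ : Kc ⊆ Ω)
    (hφ1supp : Function.support φ1 ⊆ Kc) (hφ0supp : Function.support φ0 ⊆ Kc)
    (hφmsupp : Function.support φm ⊆ Kc) (hφssupp : Function.support φs ⊆ Kc)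
    (hμ1supp : Function.support μ1 ⊆ Kc) (hussupp : Function.support us ⊆ Kc)
    (hCH : ∀ x, (3 * φ1 x - 4 * φ0 x + φm x) / (2 * δt) +
        Qs * vdiv (fun y i => φs y * us y i) x =
      vdiv (fun y i => M (φs y) * grad μ1 y i) x)
    (hchem : ∀ x, μ1 x = lam * (-(ε * lap φ1 x) + (s / ε) * φ1 x +
      (rs / ε) * (((φs x) ^ 3 - φs x) - s * φs x)))
    (hr : 3 * r1 - 4 * r0 + rm = α *
      (-(3 * E0val Ω lam ε s φ1 - 4 * E0val Ω lam ε s φ0 + E0val Ω lam ε s φm) +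
        (rs * lam / ε) *
          ∫ x in Ω, (((φs x) ^ 3 - φs x) - s * φs x) * (3 * φ1 x - 4 * φ0 x + φm x))) :
    lam * ε / 2 * (l2vsq Ω (grad φ1) - l2vsq Ω (grad φ0) +
        l2vsq Ω (fun x i => 2 * grad φ1 x i - grad φ0 x i) -
        l2vsq Ω (fun x i => 2 * grad φ0 x i - grad φm x i) +
        l2vsq Ω (fun x i => grad φ1 x i - 2 * grad φ0 x i + grad φm x i)) +
      lam * s / (2 * ε) * (l2sq Ω φ1 - l2sq Ω φ0 +
        l2sq Ω (fun x => 2 * φ1 x - φ0 x) -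
        l2sq Ω (fun x => 2 * φ0 x - φm x) +
        l2sq Ω (fun x => φ1 x - 2 * φ0 x + φm x)) +
      (1 / α) * (3 * r1 - 4 * r0 + rm) +
      (3 * E0val Ω lam ε s φ1 - 4 * E0val Ω lam ε s φ0 + E0val Ω lam ε s φm) =
      -(2 * δt) * (∫ x in Ω, M (φs x) * dot (grad μ1 x) (grad μ1 x)) -
        2 * δt * Qs * ∫ x in Ω, vdiv (fun y i => φs y * us y i) x * μ1 x := by
  obtain ⟨n, rfl⟩ : ∃ n, d = n + 1 := ⟨d - 1, (Nat.succ_pred_eq_of_pos hd).symm⟩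
  have hKcl : IsClosed Kc := hKc.isClosed
  have ts1 : tsupport φ1 ⊆ Kc := closure_minimal hφ1supp hKcl
  have ts0 : tsupport φ0 ⊆ Kc := closure_minimal hφ0supp hKcl
  have tsm : tsupport φm ⊆ Kc := closure_minimal hφmsupp hKcl
  have tss : tsupport φs ⊆ Kc := closure_minimal hφssupp hKcl
  have tsμ : tsupport μ1 ⊆ Kc := closure_minimal hμ1supp hKcl
  have z : ∀ {f : (Fin (n+1) → ℝ) → ℝ}, tsupport f ⊆ Kc → ∀ x ∉ Kc, f x = 0 :=
    fun h x hx => image_eq_zero_of_notMem_tsupport fun hm => hx (h hm)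
  have zg : ∀ {f : (Fin (n+1) → ℝ) → ℝ}, tsupport f ⊆ Kc → ∀ x ∉ Kc, grad f x = 0 :=
    fun h x hx => grad_eq_zero_of_nmem fun hm => hx (h hm)
  have gc1 : Continuous (grad φ1) := (contDiff_grad hφ1).continuous
  have gc0 : Continuous (grad φ0) := (contDiff_grad hφ0).continuous
  have gcm : Continuous (grad φm) := (contDiff_grad hφm).continuous
  have gcμ : Continuous (grad μ1) := (contDiff_grad hμ1).continuous
  have hψc : ContDiff ℝ (⊤:ℕ∞) (fun x => 3 * φ1 x - 4 * φ0 x + φm x) :=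
    ((contDiff_const.mul hφ1).sub (contDiff_const.mul hφ0)).add hφm
  have hψz : ∀ x ∉ Kc, 3 * φ1 x - 4 * φ0 x + φm x = 0 := fun x hx => by
    rw [z ts1 x hx, z ts0 x hx, z tsm x hx]; ring
  have hψcs : HasCompactSupport (fun x => 3 * φ1 x - 4 * φ0 x + φm x) :=
    HasCompactSupport.intro hKc hψz
  have hμcs : HasCompactSupport μ1 := HasCompactSupport.intro hKc (z tsμ)
  have hgradψ : ∀ x, grad (fun x => 3 * φ1 x - 4 * φ0 x + φm x) x
      = fun i => 3 * grad φ1 x i - 4 * grad φ0 x i + grad φm x i := by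
    intro x
    have h1 := (hφ1.differentiable onep x).hasFDerivAt
    have h0 := (hφ0.differentiable onep x).hasFDerivAt
    have hm2 := (hφm.differentiable onep x).hasFDerivAt
    have hh : HasFDerivAt (fun x => 3 * φ1 x - 4 * φ0 x + φm x)
        (((3:ℝ) • fderiv ℝ φ1 x - (4:ℝ) • fderiv ℝ φ0 x) + fderiv ℝ φm x) x :=
      ((h1.const_mul (3:ℝ)).sub (h0.const_mul (4:ℝ))).add hm2
    funext i
    simp [grad, hh.fderiv]
  have intdot : ∀ (v w : (Fin (n+1) → ℝ) → Fin (n+1) → ℝ), Continuous v → Continuous w →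
      (∀ x ∉ Kc, v x = 0) → Integrable fun x => dot (v x) (w x) := by
    intro v w hv hw hz0
    refine integrable_of_support hKc (continuous_dot hv hw) fun x hx => ?_
    rw [hz0 x hx]; simp [dot]
  -- continuity/vanishing of gradient combinations
  have c21 : Continuous fun x (i : Fin (n+1)) => 2 * grad φ1 x i - grad φ0 x i :=
    continuous_pi fun i => (continuous_const.mul ((continuous_apply i).comp gc1)).sub
      ((continuous_apply i).comp gc0)
  have c20 : Continuous fun x (i : Fin (n+1)) => 2 * grad φ0 x i - grad φm x i :=
    continuous_pi fun i => (continuous_const.mul ((continuous_apply i).comp gc0)).sub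
      ((continuous_apply i).comp gcm)
  have c121 : Continuous fun x (i : Fin (n+1)) => grad φ1 x i - 2 * grad φ0 x i + grad φm x i :=
    continuous_pi fun i => (((continuous_apply i).comp gc1).sub
      (continuous_const.mul ((continuous_apply i).comp gc0))).add ((continuous_apply i).comp gcm)
  have cgc : Continuous fun x (i : Fin (n+1)) => 3 * grad φ1 x i - 4 * grad φ0 x i + grad φm x i :=
    continuous_pi fun i => ((continuous_const.mul ((continuous_apply i).comp gc1)).sub
      (continuous_const.mul ((continuous_apply i).comp gc0))).add ((continuous_apply i).comp gcm)
  have z21 : ∀ x ∉ Kc, (fun i : Fin (n+1) => 2 * grad φ1 x i - grad φ0 x i) = 0 := fun x hx => by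
    funext i; rw [zg ts1 x hx, zg ts0 x hx]; simp
  have z20 : ∀ x ∉ Kc, (fun i : Fin (n+1) => 2 * grad φ0 x i - grad φm x i) = 0 := fun x hx => by
    funext i; rw [zg ts0 x hx, zg tsm x hx]; simp
  have z121 : ∀ x ∉ Kc, (fun i : Fin (n+1) => grad φ1 x i - 2 * grad φ0 x i + grad φm x i) = 0 :=
    fun x hx => by funext i; rw [zg ts1 x hx, zg ts0 x hx, zg tsm x hx]; simp
  have e1 : Integrable fun x => dot (grad φ1 x) (grad φ1 x) := intdot _ _ gc1 gc1 (zg ts1)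
  have e2 : Integrable fun x => dot (grad φ0 x) (grad φ0 x) := intdot _ _ gc0 gc0 (zg ts0)
  have e3 : Integrable fun x => dot (fun i => 2 * grad φ1 x i - grad φ0 x i)
      (fun i => 2 * grad φ1 x i - grad φ0 x i) := intdot _ _ c21 c21 z21
  have e4 : Integrable fun x => dot (fun i => 2 * grad φ0 x i - grad φm x i)
      (fun i => 2 * grad φ0 x i - grad φm x i) := intdot _ _ c20 c20 z20
  have e5 : Integrable fun x => dot (fun i => grad φ1 x i - 2 * grad φ0 x i + grad φm x i)
      (fun i => grad φ1 x i - 2 * grad φ0 x i + grad φm x i) := intdot _ _ c121 c121 z121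
  have hG : (∫ x, dot (grad φ1 x) (grad φ1 x)) - (∫ x, dot (grad φ0 x) (grad φ0 x))
      + (∫ x, dot (fun i => 2 * grad φ1 x i - grad φ0 x i)
          (fun i => 2 * grad φ1 x i - grad φ0 x i))
      - (∫ x, dot (fun i => 2 * grad φ0 x i - grad φm x i)
          (fun i => 2 * grad φ0 x i - grad φm x i))
      + (∫ x, dot (fun i => grad φ1 x i - 2 * grad φ0 x i + grad φm x i)
          (fun i => grad φ1 x i - 2 * grad φ0 x i + grad φm x i))
      = 2 * ∫ x, dot (grad φ1 x) (fun i => 3 * grad φ1 x i - 4 * grad φ0 x i + grad φm x i) := by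
    have t1 : ∫ x, (dot (grad φ1 x) (grad φ1 x) - dot (grad φ0 x) (grad φ0 x))
        = (∫ x, dot (grad φ1 x) (grad φ1 x)) - ∫ x, dot (grad φ0 x) (grad φ0 x) :=
      integral_sub e1 e2
    have t2 : ∫ x, (dot (grad φ1 x) (grad φ1 x) - dot (grad φ0 x) (grad φ0 x)
          + dot (fun i => 2 * grad φ1 x i - grad φ0 x i)
              (fun i => 2 * grad φ1 x i - grad φ0 x i))
        = (∫ x, (dot (grad φ1 x) (grad φ1 x) - dot (grad φ0 x) (grad φ0 x)))
          + ∫ x, dot (fun i => 2 * grad φ1 x i - grad φ0 x i)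
              (fun i => 2 * grad φ1 x i - grad φ0 x i) :=
      integral_add (e1.sub e2) e3
    have t3 : ∫ x, (dot (grad φ1 x) (grad φ1 x) - dot (grad φ0 x) (grad φ0 x)
          + dot (fun i => 2 * grad φ1 x i - grad φ0 x i)
              (fun i => 2 * grad φ1 x i - grad φ0 x i)
          - dot (fun i => 2 * grad φ0 x i - grad φm x i)
              (fun i => 2 * grad φ0 x i - grad φm x i))
        = (∫ x, (dot (grad φ1 x) (grad φ1 x) - dot (grad φ0 x) (grad φ0 x)
          + dot (fun i => 2 * grad φ1 x i - grad φ0 x i)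
              (fun i => 2 * grad φ1 x i - grad φ0 x i)))
          - ∫ x, dot (fun i => 2 * grad φ0 x i - grad φm x i)
              (fun i => 2 * grad φ0 x i - grad φm x i) :=
      integral_sub ((e1.sub e2).add e3) e4
    have t4 : ∫ x, (dot (grad φ1 x) (grad φ1 x) - dot (grad φ0 x) (grad φ0 x)
          + dot (fun i => 2 * grad φ1 x i - grad φ0 x i)
              (fun i => 2 * grad φ1 x i - grad φ0 x i)
          - dot (fun i => 2 * grad φ0 x i - grad φm x i)
              (fun i => 2 * grad φ0 x i - grad φm x i)
          + dot (fun i => grad φ1 x i - 2 * grad φ0 x i + grad φm x i)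
              (fun i => grad φ1 x i - 2 * grad φ0 x i + grad φm x i))
        = (∫ x, (dot (grad φ1 x) (grad φ1 x) - dot (grad φ0 x) (grad φ0 x)
          + dot (fun i => 2 * grad φ1 x i - grad φ0 x i)
              (fun i => 2 * grad φ1 x i - grad φ0 x i)
          - dot (fun i => 2 * grad φ0 x i - grad φm x i)
              (fun i => 2 * grad φ0 x i - grad φm x i)))
          + ∫ x, dot (fun i => grad φ1 x i - 2 * grad φ0 x i + grad φm x i)
              (fun i => grad φ1 x i - 2 * grad φ0 x i + grad φm x i) :=
      integral_add (((e1.sub e2).add e3).sub e4) e5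
    have t5 : ∫ x, 2 * dot (grad φ1 x)
          (fun i => 3 * grad φ1 x i - 4 * grad φ0 x i + grad φm x i)
        = 2 * ∫ x, dot (grad φ1 x)
            (fun i => 3 * grad φ1 x i - 4 * grad φ0 x i + grad φm x i) :=
      integral_const_mul 2 _
    rw [← t1, ← t2, ← t3, ← t4, ← t5]
    exact integral_congr_ae (.of_forall fun x => dot_bdf2 _ _ _)
  have f1 : Integrable fun x => (φ1 x) ^ 2 :=
    integrable_of_support hKc (hφ1.continuous.pow 2) fun x hx => by rw [z ts1 x hx]; ring
  have f2 : Integrable fun x => (φ0 x) ^ 2 :=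
    integrable_of_support hKc (hφ0.continuous.pow 2) fun x hx => by rw [z ts0 x hx]; ring
  have f3 : Integrable fun x => (2 * φ1 x - φ0 x) ^ 2 :=
    integrable_of_support hKc (((continuous_const.mul hφ1.continuous).sub hφ0.continuous).pow 2)
      fun x hx => by rw [z ts1 x hx, z ts0 x hx]; ring
  have f4 : Integrable fun x => (2 * φ0 x - φm x) ^ 2 :=
    integrable_of_support hKc (((continuous_const.mul hφ0.continuous).sub hφm.continuous).pow 2)
      fun x hx => by rw [z ts0 x hx, z tsm x hx]; ring
  have f5 : Integrable fun x => (φ1 x - 2 * φ0 x + φm x) ^ 2 :=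
    integrable_of_support hKc
      (((hφ1.continuous.sub (continuous_const.mul hφ0.continuous)).add hφm.continuous).pow 2)
      fun x hx => by rw [z ts1 x hx, z ts0 x hx, z tsm x hx]; ring
  have hP : (∫ x, (φ1 x) ^ 2) - (∫ x, (φ0 x) ^ 2) + (∫ x, (2 * φ1 x - φ0 x) ^ 2)
      - (∫ x, (2 * φ0 x - φm x) ^ 2) + (∫ x, (φ1 x - 2 * φ0 x + φm x) ^ 2)
      = 2 * ∫ x, φ1 x * (3 * φ1 x - 4 * φ0 x + φm x) := by
    have t1 : ∫ x, ((φ1 x) ^ 2 - (φ0 x) ^ 2)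
        = (∫ x, (φ1 x) ^ 2) - ∫ x, (φ0 x) ^ 2 := integral_sub f1 f2
    have t2 : ∫ x, ((φ1 x) ^ 2 - (φ0 x) ^ 2 + (2 * φ1 x - φ0 x) ^ 2)
        = (∫ x, ((φ1 x) ^ 2 - (φ0 x) ^ 2)) + ∫ x, (2 * φ1 x - φ0 x) ^ 2 :=
      integral_add (f1.sub f2) f3
    have t3 : ∫ x, ((φ1 x) ^ 2 - (φ0 x) ^ 2 + (2 * φ1 x - φ0 x) ^ 2 - (2 * φ0 x - φm x) ^ 2)
        = (∫ x, ((φ1 x) ^ 2 - (φ0 x) ^ 2 + (2 * φ1 x - φ0 x) ^ 2))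
          - ∫ x, (2 * φ0 x - φm x) ^ 2 := integral_sub ((f1.sub f2).add f3) f4
    have t4 : ∫ x, ((φ1 x) ^ 2 - (φ0 x) ^ 2 + (2 * φ1 x - φ0 x) ^ 2 - (2 * φ0 x - φm x) ^ 2
          + (φ1 x - 2 * φ0 x + φm x) ^ 2)
        = (∫ x, ((φ1 x) ^ 2 - (φ0 x) ^ 2 + (2 * φ1 x - φ0 x) ^ 2 - (2 * φ0 x - φm x) ^ 2))
          + ∫ x, (φ1 x - 2 * φ0 x + φm x) ^ 2 :=
      integral_add (((f1.sub f2).add f3).sub f4) f5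
    have t5 : ∫ x, 2 * (φ1 x * (3 * φ1 x - 4 * φ0 x + φm x))
        = 2 * ∫ x, φ1 x * (3 * φ1 x - 4 * φ0 x + φm x) := integral_const_mul 2 _
    rw [← t1, ← t2, ← t3, ← t4, ← t5]
    exact integral_congr_ae (.of_forall fun x => by ring)
  -- conversion of set integrals to full-space integrals
  have cv1 : ∫ x in Ω, dot (grad φ1 x) (grad φ1 x) = ∫ x, dot (grad φ1 x) (grad φ1 x) :=
    setInt_eq hKΩ fun x hx => by rw [zg ts1 x hx]; simp [dot]
  have cv2 : ∫ x in Ω, dot (grad φ0 x) (grad φ0 x) = ∫ x, dot (grad φ0 x) (grad φ0 x) :=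
    setInt_eq hKΩ fun x hx => by rw [zg ts0 x hx]; simp [dot]
  have cv3 : ∫ x in Ω, dot (fun i => 2 * grad φ1 x i - grad φ0 x i)
        (fun i => 2 * grad φ1 x i - grad φ0 x i)
      = ∫ x, dot (fun i => 2 * grad φ1 x i - grad φ0 x i)
          (fun i => 2 * grad φ1 x i - grad φ0 x i) :=
    setInt_eq hKΩ fun x hx => by rw [z21 x hx]; simp [dot]
  have cv4 : ∫ x in Ω, dot (fun i => 2 * grad φ0 x i - grad φm x i)
        (fun i => 2 * grad φ0 x i - grad φm x i)
      = ∫ x, dot (fun i => 2 * grad φ0 x i - grad φm x i)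
          (fun i => 2 * grad φ0 x i - grad φm x i) :=
    setInt_eq hKΩ fun x hx => by rw [z20 x hx]; simp [dot]
  have cv5 : ∫ x in Ω, dot (fun i => grad φ1 x i - 2 * grad φ0 x i + grad φm x i)
        (fun i => grad φ1 x i - 2 * grad φ0 x i + grad φm x i)
      = ∫ x, dot (fun i => grad φ1 x i - 2 * grad φ0 x i + grad φm x i)
          (fun i => grad φ1 x i - 2 * grad φ0 x i + grad φm x i) :=
    setInt_eq hKΩ fun x hx => by rw [z121 x hx]; simp [dot]
  have cs1 : ∫ x in Ω, (φ1 x) ^ 2 = ∫ x, (φ1 x) ^ 2 :=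
    setInt_eq hKΩ fun x hx => by rw [z ts1 x hx]; ring
  have cs2 : ∫ x in Ω, (φ0 x) ^ 2 = ∫ x, (φ0 x) ^ 2 :=
    setInt_eq hKΩ fun x hx => by rw [z ts0 x hx]; ring
  have cs3 : ∫ x in Ω, (2 * φ1 x - φ0 x) ^ 2 = ∫ x, (2 * φ1 x - φ0 x) ^ 2 :=
    setInt_eq hKΩ fun x hx => by rw [z ts1 x hx, z ts0 x hx]; ring
  have cs4 : ∫ x in Ω, (2 * φ0 x - φm x) ^ 2 = ∫ x, (2 * φ0 x - φm x) ^ 2 :=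
    setInt_eq hKΩ fun x hx => by rw [z ts0 x hx, z tsm x hx]; ring
  have cs5 : ∫ x in Ω, (φ1 x - 2 * φ0 x + φm x) ^ 2 = ∫ x, (φ1 x - 2 * φ0 x + φm x) ^ 2 :=
    setInt_eq hKΩ fun x hx => by rw [z ts1 x hx, z ts0 x hx, z tsm x hx]; ring
  have cvM : ∫ x in Ω, M (φs x) * dot (grad μ1 x) (grad μ1 x)
      = ∫ x, M (φs x) * dot (grad μ1 x) (grad μ1 x) :=
    setInt_eq hKΩ fun x hx => by rw [zg tsμ x hx]; simp [dot]
  have cvU : ∫ x in Ω, vdiv (fun y i => φs y * us y i) x * μ1 x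
      = ∫ x, vdiv (fun y i => φs y * us y i) x * μ1 x :=
    setInt_eq hKΩ fun x hx => by rw [z tsμ x hx]; ring
  have cvC : ∫ x in Ω, ((φs x) ^ 3 - φs x - s * φs x) * (3 * φ1 x - 4 * φ0 x + φm x)
      = ∫ x, ((φs x) ^ 3 - φs x - s * φs x) * (3 * φ1 x - 4 * φ0 x + φm x) :=
    setInt_eq hKΩ fun x hx => by rw [hψz x hx]; ring
  have hrpart : (1 / α) * (3 * r1 - 4 * r0 + rm)
      + (3 * E0val Ω lam ε s φ1 - 4 * E0val Ω lam ε s φ0 + E0val Ω lam ε s φm)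
      = rs * lam / ε *
          ∫ x, ((φs x) ^ 3 - φs x - s * φs x) * (3 * φ1 x - 4 * φ0 x + φm x) := by
    rw [hr, cvC]
    field_simp
    ring
  -- the chemical potential identity
  have hVM : ContDiff ℝ (⊤:ℕ∞) (fun y i => M (φs y) * grad μ1 y i) :=
    contDiff_pi.mpr fun i => (hM.comp hφs).mul (comp_contDiff (contDiff_grad hμ1) i)
  have hVU : ContDiff ℝ (⊤:ℕ∞) (fun y i => φs y * us y i) :=
    contDiff_pi.mpr fun i => hφs.mul (comp_contDiff hus i)
  have hlapIBP : ∫ x, (3 * φ1 x - 4 * φ0 x + φm x) * lap φ1 x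
      = - ∫ x, dot (grad φ1 x) (fun i => 3 * grad φ1 x i - 4 * grad φ0 x i + grad φm x i) := by
    have h := integral_ibp hψc (contDiff_grad hφ1) hψcs
    have h2 : ∫ x, dot (grad (fun x => 3 * φ1 x - 4 * φ0 x + φm x) x) (grad φ1 x)
        = ∫ x, dot (grad φ1 x)
            (fun i => 3 * grad φ1 x i - 4 * grad φ0 x i + grad φm x i) := by
      refine integral_congr_ae (.of_forall fun x => ?_)
      beta_reduce
      rw [hgradψ x]
      simp only [dot]
      exact Finset.sum_congr rfl fun i _ => by ring
    calc ∫ x, (3 * φ1 x - 4 * φ0 x + φm x) * lap φ1 x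
        = - ∫ x, dot (grad (fun x => 3 * φ1 x - 4 * φ0 x + φm x) x) (grad φ1 x) := h
      _ = _ := by rw [h2]
  have i_lap : Integrable fun x => (3 * φ1 x - 4 * φ0 x + φm x) * lap φ1 x :=
    integrable_of_support hKc (hψc.continuous.mul (continuous_vdiv (contDiff_grad hφ1)))
      fun x hx => by rw [hψz x hx]; ring
  have i_B : Integrable fun x => φ1 x * (3 * φ1 x - 4 * φ0 x + φm x) :=
    integrable_of_support hKc (hφ1.continuous.mul hψc.continuous)
      fun x hx => by rw [z ts1 x hx]; ring
  have i_C : Integrable fun x => ((φs x) ^ 3 - φs x - s * φs x) * (3 * φ1 x - 4 * φ0 x + φm x) :=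
    integrable_of_support hKc
      ((((hφs.continuous.pow 3).sub hφs.continuous).sub
        (continuous_const.mul hφs.continuous)).mul hψc.continuous)
      fun x hx => by rw [hψz x hx]; ring
  have hE2 : ∫ x, μ1 x * (3 * φ1 x - 4 * φ0 x + φm x)
      = lam * ε *
          (∫ x, dot (grad φ1 x) (fun i => 3 * grad φ1 x i - 4 * grad φ0 x i + grad φm x i))
        + lam * s / ε * (∫ x, φ1 x * (3 * φ1 x - 4 * φ0 x + φm x))
        + rs * lam / ε *
            ∫ x, ((φs x) ^ 3 - φs x - s * φs x) * (3 * φ1 x - 4 * φ0 x + φm x) := by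
    have hpt : (fun x => μ1 x * (3 * φ1 x - 4 * φ0 x + φm x)) = fun x =>
        (-(lam * ε)) * ((3 * φ1 x - 4 * φ0 x + φm x) * lap φ1 x)
        + (lam * s / ε) * (φ1 x * (3 * φ1 x - 4 * φ0 x + φm x))
        + (rs * lam / ε) * (((φs x) ^ 3 - φs x - s * φs x) * (3 * φ1 x - 4 * φ0 x + φm x)) := by
      funext x; rw [hchem x]; ring
    have u4 : ∫ x, ((-(lam * ε)) * ((3 * φ1 x - 4 * φ0 x + φm x) * lap φ1 x)
          + (lam * s / ε) * (φ1 x * (3 * φ1 x - 4 * φ0 x + φm x))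
          + (rs * lam / ε) * (((φs x) ^ 3 - φs x - s * φs x) * (3 * φ1 x - 4 * φ0 x + φm x)))
        = (∫ x, ((-(lam * ε)) * ((3 * φ1 x - 4 * φ0 x + φm x) * lap φ1 x)
            + (lam * s / ε) * (φ1 x * (3 * φ1 x - 4 * φ0 x + φm x))))
          + ∫ x, (rs * lam / ε) *
              (((φs x) ^ 3 - φs x - s * φs x) * (3 * φ1 x - 4 * φ0 x + φm x)) :=
      integral_add ((i_lap.const_mul _).add (i_B.const_mul _)) (i_C.const_mul _)
    have u5 : ∫ x, ((-(lam * ε)) * ((3 * φ1 x - 4 * φ0 x + φm x) * lap φ1 x)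
          + (lam * s / ε) * (φ1 x * (3 * φ1 x - 4 * φ0 x + φm x)))
        = (∫ x, (-(lam * ε)) * ((3 * φ1 x - 4 * φ0 x + φm x) * lap φ1 x))
          + ∫ x, (lam * s / ε) * (φ1 x * (3 * φ1 x - 4 * φ0 x + φm x)) :=
      integral_add (i_lap.const_mul _) (i_B.const_mul _)
    have u1 : ∫ x, (-(lam * ε)) * ((3 * φ1 x - 4 * φ0 x + φm x) * lap φ1 x)
        = (-(lam * ε)) * ∫ x, (3 * φ1 x - 4 * φ0 x + φm x) * lap φ1 x :=
      integral_const_mul _ _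
    have u2 : ∫ x, (lam * s / ε) * (φ1 x * (3 * φ1 x - 4 * φ0 x + φm x))
        = (lam * s / ε) * ∫ x, φ1 x * (3 * φ1 x - 4 * φ0 x + φm x) := integral_const_mul _ _
    have u3 : ∫ x, (rs * lam / ε) *
          (((φs x) ^ 3 - φs x - s * φs x) * (3 * φ1 x - 4 * φ0 x + φm x))
        = (rs * lam / ε) *
            ∫ x, ((φs x) ^ 3 - φs x - s * φs x) * (3 * φ1 x - 4 * φ0 x + φm x) :=
      integral_const_mul _ _
    rw [hpt, u4, u5, u1, u2, u3, hlapIBP]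
    ring
  -- the Cahn–Hilliard equation tested with μ1
  have i_D1 : Integrable fun x => μ1 x * vdiv (fun y i => M (φs y) * grad μ1 y i) x :=
    integrable_of_support hKc (hμ1.continuous.mul (continuous_vdiv hVM))
      fun x hx => by rw [z tsμ x hx]; ring
  have i_D2 : Integrable fun x => vdiv (fun y i => φs y * us y i) x * μ1 x :=
    integrable_of_support hKc ((continuous_vdiv hVU).mul hμ1.continuous)
      fun x hx => by rw [z tsμ x hx]; ring
  have hψeq : (fun x => μ1 x * (3 * φ1 x - 4 * φ0 x + φm x)) = fun x =>
      2 * δt * (μ1 x * vdiv (fun y i => M (φs y) * grad μ1 y i) x)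
        - 2 * δt * Qs * (vdiv (fun y i => φs y * us y i) x * μ1 x) := by
    funext x
    have h := hCH x
    have hψx : 3 * φ1 x - 4 * φ0 x + φm x
        = 2 * δt * vdiv (fun y i => M (φs y) * grad μ1 y i) x
          - 2 * δt * Qs * vdiv (fun y i => φs y * us y i) x := by
      field_simp at h
      linear_combination h
    rw [hψx]; ring
  have hibpμ : ∫ x, μ1 x * vdiv (fun y i => M (φs y) * grad μ1 y i) x
      = - ∫ x, M (φs x) * dot (grad μ1 x) (grad μ1 x) := by
    have h := integral_ibp hμ1 hVM hμcs
    rw [h]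
    congr 1
    refine integral_congr_ae (.of_forall fun x => ?_)
    simp only [dot, Finset.mul_sum]
    exact Finset.sum_congr rfl fun i _ => by ring
  have hE1 : ∫ x, μ1 x * (3 * φ1 x - 4 * φ0 x + φm x)
      = -(2 * δt) * (∫ x, M (φs x) * dot (grad μ1 x) (grad μ1 x))
        - 2 * δt * Qs * ∫ x, vdiv (fun y i => φs y * us y i) x * μ1 x := by
    have v1 : ∫ x, (2 * δt * (μ1 x * vdiv (fun y i => M (φs y) * grad μ1 y i) x)
          - 2 * δt * Qs * (vdiv (fun y i => φs y * us y i) x * μ1 x))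
        = (∫ x, 2 * δt * (μ1 x * vdiv (fun y i => M (φs y) * grad μ1 y i) x))
          - ∫ x, 2 * δt * Qs * (vdiv (fun y i => φs y * us y i) x * μ1 x) :=
      integral_sub (i_D1.const_mul _) (i_D2.const_mul _)
    have v2 : ∫ x, 2 * δt * (μ1 x * vdiv (fun y i => M (φs y) * grad μ1 y i) x)
        = 2 * δt * ∫ x, μ1 x * vdiv (fun y i => M (φs y) * grad μ1 y i) x :=
      integral_const_mul _ _
    have v3 : ∫ x, 2 * δt * Qs * (vdiv (fun y i => φs y * us y i) x * μ1 x)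
        = 2 * δt * Qs * ∫ x, vdiv (fun y i => φs y * us y i) x * μ1 x :=
      integral_const_mul _ _
    rw [hψeq, v1, v2, v3, hibpμ]
    ring
  simp only [l2vsq, l2sq]
  rw [cv1, cv2, cv3, cv4, cv5, cs1, cs2, cs3, cs4, cs5, cvM, cvU]
  linear_combination (lam * ε / 2) * hG + (lam * s / (2 * ε)) * hP + hrpart + hE1 - hE2
end
end

section
/- Let d ≥ 1, Ω ⊂ ℝ^d open and bounded, δt > 0, and K*, R*, Q* ∈ ℝ. Let u^{n+1}, u^n, u^{n−1}, u*, J* : ℝ^d → ℝ^d and φ*, μ*, p^n, ω^n, ω^{n−1} : ℝ^d → ℝ be smooth with supports in a fixed compact subset of Ω, and let ρ^{n+1}, ρ^n, ρ^{n−1}, ν^{n+1} : ℝ^d → ℝ be C¹. Assume pointwise on ℝ^d the discrete momentum equation (with zero gravity): K*( ρ^{n+1} (3u^{n+1} − 4u^n + u^{n−1})/(2δt) + (1/2)((3ρ^{n+1} − 4ρ^n + ρ^{n−1})/(2δt)) u^{n+1} ) − ∇·(ν^{n+1} D(u^{n+1})) + R* ∇(p^n + (4/3)ω^n − (1/3)ω^{n−1})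 + Q* φ* ∇μ* + R* ρ^{n+1} (u*·∇)u* + (1/2) R* ∇·(ρ^{n+1}u*) u* + R* (J*·∇)u* + (1/2) R* (∇·J*) u* = 0. Then K* ∫_Ω ρ^{n+1} ⟨3u^{n+1} − 4u^n + u^{n−1}, u^{n+1}⟩ dx + (K*/2) ∫_Ω (3ρ^{n+1} − 4ρ^n + ρ^{n−1}) |u^{n+1}|² dx + δt ∫_Ω ν^{n+1} |D(u^{n+1})|² dx + 2δt R* ∫_Ω ⟨∇(p^n + (4/3)ω^n − (1/3)ω^{n−1}), u^{n+1}⟩ dx + 2δt Q* ∫_Ω φ* ⟨∇μ*, u^{n+1}⟩ dx + 2δt R* ∫_Ω ρ^{n+1} ⟨(u*·∇)u*, u^{n+1}⟩ dx + δt R* ∫_Ω ∇·(ρ^{n+1}u*) ⟨u*, u^{n+1}⟩ dx + 2δt R* ∫_Ω ⟨(J*·∇)u*, u^{n+1}⟩ dx + δt R* ∫_Ω (∇·J*) ⟨u*, u^{n+1}⟩ dx = 0. -/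
open MeasureTheory

noncomputable section

section Aux

variable {d : ℕ}

lemma symsum (ν : ℝ) (a : Fin d → Fin d → ℝ) :
    ∑ i, ∑ j, (ν * (a i j + a j i)) * a i j = 1 / 2 * (ν * ∑ i, ∑ j, (a i j + a j i) ^ 2) := by
  have h1 : ∑ i, ∑ j, (a i j + a j i) * a j i = ∑ i, ∑ j, (a i j + a j i) * a i j := by
    rw [Finset.sum_comm]
    exact Finset.sum_congr rfl fun i _ => Finset.sum_congr rfl fun j _ => by ring
  have h2 : ∑ i, ∑ j, (a i j + a j i) ^ 2
      = ∑ i, ∑ j, ((a i j + a j i) * a i j + (a i j + a j i) * a j i) :=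
    Finset.sum_congr rfl fun i _ => Finset.sum_congr rfl fun j _ => by ring
  have h3 : ∑ i, ∑ j, (ν * (a i j + a j i)) * a i j
      = ν * ∑ i, ∑ j, (a i j + a j i) * a i j := by
    rw [Finset.mul_sum]
    exact Finset.sum_congr rfl fun i _ => by
      rw [Finset.mul_sum]; exact Finset.sum_congr rfl fun j _ => by ring
  simp only [Finset.sum_add_distrib] at h2
  rw [h3, h2, h1]; ring

lemma contDiff_comp {u : (Fin d → ℝ) → (Fin d → ℝ)} (hu : ContDiff ℝ (⊤ : ℕ∞) u) (i : Fin d) :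
    ContDiff ℝ (⊤ : ℕ∞) fun y => u y i :=
  (ContinuousLinearMap.proj (R := ℝ) (φ := fun _ : Fin d => ℝ) i).contDiff.comp hu

lemma contDiff_fderiv_apply {f : (Fin d → ℝ) → ℝ} (hf : ContDiff ℝ (⊤ : ℕ∞) f) (v : Fin d → ℝ) :
    ContDiff ℝ (⊤ : ℕ∞) fun x => fderiv ℝ f x v :=
  (hf.fderiv_right (by exact_mod_cast le_top)).clm_apply contDiff_const

lemma cont_fd {f : (Fin d → ℝ) → ℝ} (hf : ContDiff ℝ 1 f) (v : Fin d → ℝ) :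
    Continuous fun x => fderiv ℝ f x v :=
  (hf.continuous_fderiv one_ne_zero).clm_apply continuous_const

lemma cont_fd' {f : (Fin d → ℝ) → ℝ} (hf : ContDiff ℝ 1 f)
    {v : (Fin d → ℝ) → (Fin d → ℝ)} (hv : Continuous v) :
    Continuous fun x => fderiv ℝ f x (v x) :=
  (hf.continuous_fderiv one_ne_zero).clm_apply hv

lemma fderiv_zero_outside {Kc : Set (Fin d → ℝ)} (hcl : IsClosed Kc)
    {f : (Fin d → ℝ) → ℝ} (hs : Function.support f ⊆ Kc) {x : Fin d → ℝ} (hx : x ∉ Kc) :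
    fderiv ℝ f x = 0 := by
  have h1 : f =ᶠ[nhds x] fun _ => (0 : ℝ) := by
    filter_upwards [hcl.isOpen_compl.mem_nhds hx] with y hy
    exact Function.notMem_support.mp fun h => hy (hs h)
  rw [h1.fderiv_eq]
  exact fderiv_const_apply 0

end Aux

theorem stmt10 {d : ℕ} (hd : 1 ≤ d) (Ω : Set (Fin d → ℝ)) (hΩo : IsOpen Ω)
    (hΩb : Bornology.IsBounded Ω)
    (δt : ℝ) (hδt : 0 < δt) (Ks Rs Qs : ℝ)
    (u1 u0 um us Js : (Fin d → ℝ) → (Fin d → ℝ))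
    (φs μs p0 ω0 ωm : (Fin d → ℝ) → ℝ)
    (hu1 : ContDiff ℝ (⊤ : ℕ∞) u1) (hu0 : ContDiff ℝ (⊤ : ℕ∞) u0)
    (hum : ContDiff ℝ (⊤ : ℕ∞) um) (hus : ContDiff ℝ (⊤ : ℕ∞) us)
    (hJs : ContDiff ℝ (⊤ : ℕ∞) Js)
    (hφs : ContDiff ℝ (⊤ : ℕ∞) φs) (hμs : ContDiff ℝ (⊤ : ℕ∞) μs)
    (hp0 : ContDiff ℝ (⊤ : ℕ∞) p0) (hω0 : ContDiff ℝ (⊤ : ℕ∞) ω0)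
    (hωm : ContDiff ℝ (⊤ : ℕ∞) ωm)
    (ρ1 ρ0 ρm ν1 : (Fin d → ℝ) → ℝ)
    (hρ1 : ContDiff ℝ 1 ρ1) (hρ0 : ContDiff ℝ 1 ρ0) (hρm : ContDiff ℝ 1 ρm)
    (hν1 : ContDiff ℝ 1 ν1)
    (Kc : Set (Fin d → ℝ)) (hKc : IsCompact Kc) (hKΩ : Kc ⊆ Ω)
    (hu1supp : Function.support u1 ⊆ Kc) (hu0supp : Function.support u0 ⊆ Kc)
    (humsupp : Function.support um ⊆ Kc) (hussupp : Function.support us ⊆ Kc)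
    (hJssupp : Function.support Js ⊆ Kc)
    (hφssupp : Function.support φs ⊆ Kc) (hμssupp : Function.support μs ⊆ Kc)
    (hp0supp : Function.support p0 ⊆ Kc) (hω0supp : Function.support ω0 ⊆ Kc)
    (hωmsupp : Function.support ωm ⊆ Kc)
    (hmom : ∀ x (i : Fin d),
      Ks * (ρ1 x * ((3 * u1 x i - 4 * u0 x i + um x i) / (2 * δt)) +
          (1 / 2) * ((3 * ρ1 x - 4 * ρ0 x + ρm x) / (2 * δt)) * u1 x i) -
        divStrain ν1 u1 x i +
        Rs * grad (fun y => p0 y + (4 / 3) * ω0 y - (1 / 3) * ωm y) x i +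
        Qs * φs x * grad μs x i +
        Rs * ρ1 x * dirD us us x i +
        (1 / 2) * Rs * vdiv (fun y j => ρ1 y * us y j) x * us x i +
        Rs * dirD Js us x i +
        (1 / 2) * Rs * vdiv Js x * us x i = 0) :
    Ks * (∫ x in Ω, ρ1 x *
        dot (fun i => 3 * u1 x i - 4 * u0 x i + um x i) (u1 x)) +
      (Ks / 2) * (∫ x in Ω, (3 * ρ1 x - 4 * ρ0 x + ρm x) * dot (u1 x) (u1 x)) +
      δt * (∫ x in Ω, ν1 x * strainSq u1 x) +
      2 * δt * Rs * (∫ x in Ω,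
        dot (grad (fun y => p0 y + (4 / 3) * ω0 y - (1 / 3) * ωm y) x) (u1 x)) +
      2 * δt * Qs * (∫ x in Ω, φs x * dot (grad μs x) (u1 x)) +
      2 * δt * Rs * (∫ x in Ω, ρ1 x * dot (dirD us us x) (u1 x)) +
      δt * Rs * (∫ x in Ω, vdiv (fun y j => ρ1 y * us y j) x * dot (us x) (u1 x)) +
      2 * δt * Rs * (∫ x in Ω, dot (dirD Js us x) (u1 x)) +
      δt * Rs * (∫ x in Ω, vdiv Js x * dot (us x) (u1 x)) = 0 := by
  have hKcl : IsClosed Kc := hKc.isClosed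
  -- support of components
  have hsc : ∀ (u : (Fin d → ℝ) → (Fin d → ℝ)), Function.support u ⊆ Kc →
      ∀ i, Function.support (fun y => u y i) ⊆ Kc := by
    intro u hs i y hy
    simp only [Function.mem_support] at hy
    exact hs (Function.mem_support.mpr fun h => hy (by rw [h]; rfl))
  have hu10 : ∀ x ∉ Kc, u1 x = 0 := fun x hx =>
    Function.notMem_support.mp fun h => hx (hu1supp h)
  -- conversion: continuous + vanishing off Kc ⇒ integrable and set integral = integral
  have conv : ∀ f : (Fin d → ℝ) → ℝ, Continuous f → (∀ x ∉ Kc, f x = 0) →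
      Integrable f volume ∧ ∫ x in Ω, f x = ∫ x, f x := by
    intro f hc h0
    exact ⟨hc.integrable_of_hasCompactSupport (HasCompactSupport.intro hKc h0),
      setIntegral_eq_integral_of_forall_compl_eq_zero fun x hx => h0 x fun hm => hx (hKΩ hm)⟩
  -- component regularity
  have hc1 : ∀ i, ContDiff ℝ 1 fun y => u1 y i := fun i => (contDiff_comp hu1 i).of_le (by exact_mod_cast le_top)
  have hcs : ∀ i, ContDiff ℝ 1 fun y => us y i := fun i => (contDiff_comp hus i).of_le (by exact_mod_cast le_top)
  have hcJ : ∀ i, ContDiff ℝ 1 fun y => Js y i := fun i => (contDiff_comp hJs i).of_le (by exact_mod_cast le_top)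
  have hcu1 : Continuous u1 := hu1.continuous
  have hcus : Continuous us := hus.continuous
  have capp : ∀ (u : (Fin d → ℝ) → (Fin d → ℝ)), Continuous u →
      ∀ i, Continuous fun x => u x i := fun u hu i => (continuous_apply i).comp hu
  have cdot : ∀ {v w : (Fin d → ℝ) → Fin d → ℝ}, (∀ i, Continuous fun x => v x i) →
      (∀ i, Continuous fun x => w x i) → Continuous fun x => dot (v x) (w x) := by
    intro v w hv hw
    simp only [dot]
    exact continuous_finset_sum _ fun i _ => (hv i).mul (hw i)
  -- strain regularity
  have hstrCD : ∀ i j, ContDiff ℝ 1 fun y => strain u1 y i j := by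
    intro i j
    simp only [strain]
    exact ((contDiff_fderiv_apply (contDiff_comp hu1 i) _).add
      (contDiff_fderiv_apply (contDiff_comp hu1 j) _)).of_le (by exact_mod_cast le_top)
  have hfijCD : ∀ i j, ContDiff ℝ 1 fun y => ν1 y * strain u1 y i j :=
    fun i j => hν1.mul (hstrCD i j)
  have hstr0 : ∀ x ∉ Kc, ∀ i j, strain u1 x i j = 0 := by
    intro x hx i j
    have a1 := fderiv_zero_outside hKcl (hsc u1 hu1supp i) hx
    have a2 := fderiv_zero_outside hKcl (hsc u1 hu1supp j) hx
    simp [strain, a1, a2]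
  -- integrability for the integration by parts
  have intA : ∀ i j, Integrable (fun x =>
      fderiv ℝ (fun y => ν1 y * strain u1 y i j) x (Pi.single j 1) * u1 x i) volume := by
    intro i j
    refine (conv _ ((cont_fd (hfijCD i j) _).mul (capp u1 hcu1 i)) ?_).1
    intro x hx; simp only [Pi.mul_apply]; rw [hu10 x hx]; simp
  have intB : ∀ i j, Integrable (fun x =>
      ν1 x * strain u1 x i j * fderiv ℝ (fun y => u1 y i) x (Pi.single j 1)) volume := by
    intro i j
    refine (conv _ (((hν1.continuous.mul (hstrCD i j).continuous)).mul (cont_fd (hc1 i) _)) ?_).1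
    intro x hx; simp only [Pi.mul_apply]; rw [hstr0 x hx i j]; ring
  have intC : ∀ i j, Integrable (fun x => ν1 x * strain u1 x i j * u1 x i) volume := by
    intro i j
    refine (conv _ (((hν1.continuous.mul (hstrCD i j).continuous)).mul (capp u1 hcu1 i)) ?_).1
    intro x hx; simp only [Pi.mul_apply]; rw [hstr0 x hx i j]; ring
  -- integration by parts per pair (i, j)
  have hibp : ∀ i j,
      (∫ x, fderiv ℝ (fun y => ν1 y * strain u1 y i j) x (Pi.single j 1) * u1 x i)
      = -∫ x, ν1 x * strain u1 x i j * fderiv ℝ (fun y => u1 y i) x (Pi.single j 1) := by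
    intro i j
    have h := integral_mul_fderiv_eq_neg_fderiv_mul_of_integrable (intA i j) (intB i j)
      (intC i j) (fun x _ => (hfijCD i j).differentiable one_ne_zero x) (fun x _ => (hc1 i).differentiable one_ne_zero x)
    linarith
  -- the viscous term
  have hSSc : Continuous fun x => ν1 x * strainSq u1 x := by
    have : Continuous fun x => ∑ i, ∑ j, (strain u1 x i j) ^ 2 :=
      continuous_finset_sum _ fun i _ => continuous_finset_sum _ fun j _ =>
        (hstrCD i j).continuous.pow 2
    exact hν1.continuous.mul this
  have hSS0 : ∀ x ∉ Kc, ν1 x * strainSq u1 x = 0 := by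
    intro x hx
    have : strainSq u1 x = 0 := by
      simp only [strainSq]
      exact Finset.sum_eq_zero fun i _ => Finset.sum_eq_zero fun j _ => by
        rw [hstr0 x hx i j]; ring
    rw [this, mul_zero]
  have convSS := conv _ hSSc hSS0
  have claimB : (∫ x, dot (divStrain ν1 u1 x) (u1 x))
      = -(1 / 2 * ∫ x, ν1 x * strainSq u1 x) := by
    have h1 : (fun x => dot (divStrain ν1 u1 x) (u1 x))
        = fun x => ∑ i, ∑ j,
            fderiv ℝ (fun y => ν1 y * strain u1 y i j) x (Pi.single j 1) * u1 x i := by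
      funext x
      simp only [dot, divStrain, Finset.sum_mul]
    have h4 : ∑ i : Fin d, ∑ j : Fin d, ∫ x, ν1 x * strain u1 x i j *
          fderiv ℝ (fun y => u1 y i) x (Pi.single j 1)
        = 1 / 2 * ∫ x, ν1 x * strainSq u1 x := by
      rw [Finset.sum_congr rfl fun i (_ : i ∈ Finset.univ) =>
            (integral_finset_sum _ fun j _ => intB i j).symm,
          ← integral_finset_sum _ fun i _ => integrable_finset_sum _ fun j _ => intB i j]
      rw [show (fun x => ∑ i : Fin d, ∑ j : Fin d, ν1 x * strain u1 x i j *
            fderiv ℝ (fun y => u1 y i) x (Pi.single j 1))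
          = fun x => 1 / 2 * (ν1 x * strainSq u1 x) from funext fun x => by
            simp only [strainSq, strain]
            exact symsum (ν1 x) fun i j => fderiv ℝ (fun y => u1 y i) x (Pi.single j 1)]
      exact integral_const_mul _ _
    rw [h1, integral_finset_sum _ fun i _ => integrable_finset_sum _ fun j _ => intA i j]
    rw [Finset.sum_congr rfl fun i (_ : i ∈ Finset.univ) =>
          integral_finset_sum _ fun j _ => intA i j]
    rw [Finset.sum_congr rfl fun i (_ : i ∈ Finset.univ) =>
          Finset.sum_congr rfl fun j (_ : j ∈ Finset.univ) => hibp i j]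
    simp only [Finset.sum_neg_distrib]
    rw [h4]
  -- pointwise identity from the momentum equation
  have claimA : ∀ x,
      Ks * (ρ1 x * dot (fun i => 3 * u1 x i - 4 * u0 x i + um x i) (u1 x)) +
      Ks / 2 * ((3 * ρ1 x - 4 * ρ0 x + ρm x) * dot (u1 x) (u1 x)) +
      2 * δt * Rs * dot (grad (fun y => p0 y + (4 / 3) * ω0 y - (1 / 3) * ωm y) x) (u1 x) +
      2 * δt * Qs * (φs x * dot (grad μs x) (u1 x)) +
      2 * δt * Rs * (ρ1 x * dot (dirD us us x) (u1 x)) +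
      δt * Rs * (vdiv (fun y j => ρ1 y * us y j) x * dot (us x) (u1 x)) +
      2 * δt * Rs * dot (dirD Js us x) (u1 x) +
      δt * Rs * (vdiv Js x * dot (us x) (u1 x))
      = 2 * δt * dot (divStrain ν1 u1 x) (u1 x) := by
    intro x
    have hδ : δt ≠ 0 := ne_of_gt hδt
    have step1 :
        Ks * (ρ1 x * dot (fun i => 3 * u1 x i - 4 * u0 x i + um x i) (u1 x)) +
        Ks / 2 * ((3 * ρ1 x - 4 * ρ0 x + ρm x) * dot (u1 x) (u1 x)) +
        2 * δt * Rs * dot (grad (fun y => p0 y + (4 / 3) * ω0 y - (1 / 3) * ωm y) x) (u1 x) +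
        2 * δt * Qs * (φs x * dot (grad μs x) (u1 x)) +
        2 * δt * Rs * (ρ1 x * dot (dirD us us x) (u1 x)) +
        δt * Rs * (vdiv (fun y j => ρ1 y * us y j) x * dot (us x) (u1 x)) +
        2 * δt * Rs * dot (dirD Js us x) (u1 x) +
        δt * Rs * (vdiv Js x * dot (us x) (u1 x))
        = ∑ i, (2 * δt * u1 x i *
            (Ks * (ρ1 x * ((3 * u1 x i - 4 * u0 x i + um x i) / (2 * δt)) +
              (1 / 2) * ((3 * ρ1 x - 4 * ρ0 x + ρm x) / (2 * δt)) * u1 x i) -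
            divStrain ν1 u1 x i +
            Rs * grad (fun y => p0 y + (4 / 3) * ω0 y - (1 / 3) * ωm y) x i +
            Qs * φs x * grad μs x i +
            Rs * ρ1 x * dirD us us x i +
            (1 / 2) * Rs * vdiv (fun y j => ρ1 y * us y j) x * us x i +
            Rs * dirD Js us x i +
            (1 / 2) * Rs * vdiv Js x * us x i)
          + 2 * δt * (divStrain ν1 u1 x i * u1 x i)) := by
      simp only [dot, Finset.mul_sum, ← Finset.sum_add_distrib]
      refine Finset.sum_congr rfl fun i _ => ?_
      field_simp
      ring
    rw [step1,
      Finset.sum_congr rfl fun i (_ : i ∈ Finset.univ) =>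
        congrArg (fun t => 2 * δt * u1 x i * t +
          2 * δt * (divStrain ν1 u1 x i * u1 x i)) (hmom x i)]
    simp only [dot, Finset.mul_sum, mul_zero, zero_add]
  -- the nine integrands: continuity, vanishing, conversion
  have R1 := conv (fun x => ρ1 x * dot (fun i => 3 * u1 x i - 4 * u0 x i + um x i) (u1 x))
    (hρ1.continuous.mul (cdot (fun i =>
      ((continuous_const.mul (capp u1 hcu1 i)).sub
        (continuous_const.mul (capp u0 hu0.continuous i))).add (capp um hum.continuous i))
      (capp u1 hcu1)))
    (fun x hx => by simp [dot, hu10 x hx])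
  have R2 := conv (fun x => (3 * ρ1 x - 4 * ρ0 x + ρm x) * dot (u1 x) (u1 x))
    ((((continuous_const.mul hρ1.continuous).sub
        (continuous_const.mul hρ0.continuous)).add hρm.continuous).mul
      (cdot (capp u1 hcu1) (capp u1 hcu1)))
    (fun x hx => by simp [dot, hu10 x hx])
  have R4 := conv (fun x => dot (grad (fun y => p0 y + (4 / 3) * ω0 y - (1 / 3) * ωm y) x) (u1 x))
    (cdot (fun i => by
        simp only [grad]
        exact cont_fd (((hp0.add (contDiff_const.mul hω0)).sub
          (contDiff_const.mul hωm)).of_le (by exact_mod_cast le_top)) _)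
      (capp u1 hcu1))
    (fun x hx => by simp [dot, hu10 x hx])
  have R5 := conv (fun x => φs x * dot (grad μs x) (u1 x))
    (hφs.continuous.mul (cdot (fun i => by
        simp only [grad]; exact cont_fd (hμs.of_le (by exact_mod_cast le_top)) _) (capp u1 hcu1)))
    (fun x hx => by simp [dot, hu10 x hx])
  have R6 := conv (fun x => ρ1 x * dot (dirD us us x) (u1 x))
    (hρ1.continuous.mul (cdot (fun i => by
        simp only [dirD]; exact cont_fd' (hcs i) hcus) (capp u1 hcu1)))
    (fun x hx => by simp [dot, hu10 x hx])
  have R7 := conv (fun x => vdiv (fun y j => ρ1 y * us y j) x * dot (us x) (u1 x))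
    ((by
        simp only [vdiv]
        exact continuous_finset_sum _ fun i _ => cont_fd (hρ1.mul (hcs i)) _ :
        Continuous fun x => vdiv (fun y j => ρ1 y * us y j) x).mul
      (cdot (capp us hcus) (capp u1 hcu1)))
    (fun x hx => by simp [dot, hu10 x hx])
  have R8 := conv (fun x => dot (dirD Js us x) (u1 x))
    (cdot (fun i => by
        simp only [dirD]; exact cont_fd' (hcs i) hJs.continuous) (capp u1 hcu1))
    (fun x hx => by simp [dot, hu10 x hx])
  have R9 := conv (fun x => vdiv Js x * dot (us x) (u1 x))
    ((by
        simp only [vdiv]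
        exact continuous_finset_sum _ fun i _ => cont_fd (hcJ i) _ :
        Continuous fun x => vdiv Js x).mul (cdot (capp us hcus) (capp u1 hcu1)))
    (fun x hx => by simp [dot, hu10 x hx])
  -- move to integrals over all of space
  rw [R1.2, R2.2, convSS.2, R4.2, R5.2, R6.2, R7.2, R8.2, R9.2]
  -- combine
  have hadd : ∀ (f g : (Fin d → ℝ) → ℝ), Integrable f volume → Integrable g volume →
      (∫ x, (f x + g x)) = (∫ x, f x) + (∫ x, g x) ∧ Integrable (fun x => f x + g x) volume :=
    fun f g hf hg => ⟨integral_add hf hg, hf.add hg⟩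
  have j1 := R1.1.const_mul Ks
  have j2 := R2.1.const_mul (Ks / 2)
  have j4 := R4.1.const_mul (2 * δt * Rs)
  have j5 := R5.1.const_mul (2 * δt * Qs)
  have j6 := R6.1.const_mul (2 * δt * Rs)
  have j7 := R7.1.const_mul (δt * Rs)
  have j8 := R8.1.const_mul (2 * δt * Rs)
  have j9 := R9.1.const_mul (δt * Rs)
  have hBsum :
      (∫ x, (Ks * (ρ1 x * dot (fun i => 3 * u1 x i - 4 * u0 x i + um x i) (u1 x)) +
        Ks / 2 * ((3 * ρ1 x - 4 * ρ0 x + ρm x) * dot (u1 x) (u1 x)) +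
        2 * δt * Rs * dot (grad (fun y => p0 y + (4 / 3) * ω0 y - (1 / 3) * ωm y) x) (u1 x) +
        2 * δt * Qs * (φs x * dot (grad μs x) (u1 x)) +
        2 * δt * Rs * (ρ1 x * dot (dirD us us x) (u1 x)) +
        δt * Rs * (vdiv (fun y j => ρ1 y * us y j) x * dot (us x) (u1 x)) +
        2 * δt * Rs * dot (dirD Js us x) (u1 x) +
        δt * Rs * (vdiv Js x * dot (us x) (u1 x))))
      = Ks * (∫ x, ρ1 x * dot (fun i => 3 * u1 x i - 4 * u0 x i + um x i) (u1 x)) +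
        Ks / 2 * (∫ x, (3 * ρ1 x - 4 * ρ0 x + ρm x) * dot (u1 x) (u1 x)) +
        2 * δt * Rs * (∫ x, dot (grad (fun y => p0 y + (4 / 3) * ω0 y - (1 / 3) * ωm y) x) (u1 x)) +
        2 * δt * Qs * (∫ x, φs x * dot (grad μs x) (u1 x)) +
        2 * δt * Rs * (∫ x, ρ1 x * dot (dirD us us x) (u1 x)) +
        δt * Rs * (∫ x, vdiv (fun y j => ρ1 y * us y j) x * dot (us x) (u1 x)) +
        2 * δt * Rs * (∫ x, dot (dirD Js us x) (u1 x)) +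
        δt * Rs * (∫ x, vdiv Js x * dot (us x) (u1 x)) := by
    have s2 := hadd _ _ j1 j2
    have s4 := hadd _ _ s2.2 j4
    have s5 := hadd _ _ s4.2 j5
    have s6 := hadd _ _ s5.2 j6
    have s7 := hadd _ _ s6.2 j7
    have s8 := hadd _ _ s7.2 j8
    have s9 := hadd _ _ s8.2 j9
    rw [s9.1, s8.1, s7.1, s6.1, s5.1, s4.1, s2.1]
    simp only [integral_const_mul]
  have hB2 :
      (∫ x, (Ks * (ρ1 x * dot (fun i => 3 * u1 x i - 4 * u0 x i + um x i) (u1 x)) +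
        Ks / 2 * ((3 * ρ1 x - 4 * ρ0 x + ρm x) * dot (u1 x) (u1 x)) +
        2 * δt * Rs * dot (grad (fun y => p0 y + (4 / 3) * ω0 y - (1 / 3) * ωm y) x) (u1 x) +
        2 * δt * Qs * (φs x * dot (grad μs x) (u1 x)) +
        2 * δt * Rs * (ρ1 x * dot (dirD us us x) (u1 x)) +
        δt * Rs * (vdiv (fun y j => ρ1 y * us y j) x * dot (us x) (u1 x)) +
        2 * δt * Rs * dot (dirD Js us x) (u1 x) +
        δt * Rs * (vdiv Js x * dot (us x) (u1 x))))
      = 2 * δt * ∫ x, dot (divStrain ν1 u1 x) (u1 x) := by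
    rw [show (fun x => (Ks * (ρ1 x * dot (fun i => 3 * u1 x i - 4 * u0 x i + um x i) (u1 x)) +
        Ks / 2 * ((3 * ρ1 x - 4 * ρ0 x + ρm x) * dot (u1 x) (u1 x)) +
        2 * δt * Rs * dot (grad (fun y => p0 y + (4 / 3) * ω0 y - (1 / 3) * ωm y) x) (u1 x) +
        2 * δt * Qs * (φs x * dot (grad μs x) (u1 x)) +
        2 * δt * Rs * (ρ1 x * dot (dirD us us x) (u1 x)) +
        δt * Rs * (vdiv (fun y j => ρ1 y * us y j) x * dot (us x) (u1 x)) +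
        2 * δt * Rs * dot (dirD Js us x) (u1 x) +
        δt * Rs * (vdiv Js x * dot (us x) (u1 x))))
      = fun x => 2 * δt * dot (divStrain ν1 u1 x) (u1 x) from funext claimA]
    exact integral_const_mul _ _
  have final := hBsum.symm.trans (hB2.trans (by rw [claimB]))
  linear_combination final
end
end

section
/- Let d ≥ 1, Ω ⊂ ℝ^d open and bounded, δt > 0, χ > 0, T* ∈ ℝ. Let ω^{n+1}, p^{n+1}, p^n : ℝ^d → ℝ, u^{n+1} : ℝ^d → ℝ^d be smooth with supports in a fixed compact subset of Ω, and let ν^{n+1} : ℝ^d → ℝ be smooth. Assume pointwise on ℝ^d: Δω^{n+1} = T* (3χ/(2δt)) ∇·u^{n+1} and p^{n+1} = ω^{n+1} + p^n − T* ν^{n+1} ∇·u^{n+1}. Then (2δt²/(3χ)) ( ‖∇p^{n+1}‖² − ‖∇p^n‖² + ‖∇p^{n+1} − ∇p^n‖² ) = −2δt T* ∫_Ω p^{n+1} ∇·u^{n+1} dx − (4δt²/(3χ)) T* ∫_Ω ⟨∇(ν^{n+1} ∇·u^{n+1}), ∇p^{n+1}⟩ dx. -/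
open MeasureTheory

noncomputable section

lemma auxContDiffFderiv {d : ℕ} {f : (Fin d → ℝ) → ℝ} (hf : ContDiff ℝ (⊤ : ℕ∞) f)
    (v : Fin d → ℝ) : ContDiff ℝ (⊤ : ℕ∞) (fun y => fderiv ℝ f y v) :=
  (hf.fderiv_right (by norm_cast)).clm_apply contDiff_const

lemma auxSupportFderiv {d : ℕ} {f : (Fin d → ℝ) → ℝ} {K : Set (Fin d → ℝ)} (hK : IsClosed K)
    (h : Function.support f ⊆ K) (v : Fin d → ℝ) :
    Function.support (fun x => fderiv ℝ f x v) ⊆ K := by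
  intro x hx
  have h1 : fderiv ℝ f x ≠ 0 := by
    intro h0
    exact hx (by simp [h0])
  exact closure_minimal h hK (support_fderiv_subset ℝ h1)

lemma auxIbp {d : ℕ} {f g : (Fin d → ℝ) → ℝ} (hf : ContDiff ℝ (⊤ : ℕ∞) f)
    (hg : ContDiff ℝ (⊤ : ℕ∞) g) (hfs : HasCompactSupport f) (hgs : HasCompactSupport g)
    (v : Fin d → ℝ) :
    ∫ x, fderiv ℝ f x v * g x = -∫ x, fderiv ℝ g x v * f x := by
  obtain ⟨C, hC⟩ := ContDiff.lipschitzWith_of_hasCompactSupport hfs hf (by norm_cast)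
  obtain ⟨D, hD⟩ := ContDiff.lipschitzWith_of_hasCompactSupport hgs hg (by norm_cast)
  have h := LipschitzWith.integral_lineDeriv_mul_eq (μ := volume) hC hD hgs v
  have e1 : ∀ x, lineDeriv ℝ f x v = fderiv ℝ f x v := fun x =>
    (hf.differentiable (by norm_cast) x).lineDeriv_eq_fderiv
  have e2 : ∀ x, lineDeriv ℝ g x (-v) = -(fderiv ℝ g x v) := fun x => by
    rw [(hg.differentiable (by norm_cast) x).lineDeriv_eq_fderiv, map_neg]
  simp only [e1, e2, neg_mul] at h
  rw [h, integral_neg]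

theorem stmt12 {d : ℕ} (hd : 1 ≤ d) (Ω : Set (Fin d → ℝ)) (hΩo : IsOpen Ω)
    (hΩb : Bornology.IsBounded Ω)
    (δt χ : ℝ) (hδt : 0 < δt) (hχ : 0 < χ) (Ts : ℝ)
    (ω1 p1 p0 : (Fin d → ℝ) → ℝ) (u1 : (Fin d → ℝ) → (Fin d → ℝ))
    (ν1 : (Fin d → ℝ) → ℝ)
    (hω1 : ContDiff ℝ (⊤ : ℕ∞) ω1) (hp1 : ContDiff ℝ (⊤ : ℕ∞) p1)
    (hp0 : ContDiff ℝ (⊤ : ℕ∞) p0) (hu1 : ContDiff ℝ (⊤ : ℕ∞) u1)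
    (hν1 : ContDiff ℝ (⊤ : ℕ∞) ν1)
    (Kc : Set (Fin d → ℝ)) (hKc : IsCompact Kc) (hKΩ : Kc ⊆ Ω)
    (hω1supp : Function.support ω1 ⊆ Kc) (hp1supp : Function.support p1 ⊆ Kc)
    (hp0supp : Function.support p0 ⊆ Kc) (hu1supp : Function.support u1 ⊆ Kc)
    (hpois : ∀ x, lap ω1 x = Ts * (3 * χ / (2 * δt)) * vdiv u1 x)
    (hpupd : ∀ x, p1 x = ω1 x + p0 x - Ts * ν1 x * vdiv u1 x) :
    2 * δt ^ 2 / (3 * χ) * (l2vsq Ω (grad p1) - l2vsq Ω (grad p0) +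
        l2vsq Ω (fun x i => grad p1 x i - grad p0 x i)) =
      -(2 * δt * Ts) * (∫ x in Ω, p1 x * vdiv u1 x) -
        4 * δt ^ 2 / (3 * χ) * Ts *
          ∫ x in Ω, dot (grad (fun y => ν1 y * vdiv u1 y) x) (grad p1 x) := by
  classical
  have hKcl : IsClosed Kc := hKc.isClosed
  set g : (Fin d → ℝ) → ℝ := fun y => ν1 y * vdiv u1 y with hg_def
  -- smoothness
  have hu1i : ∀ i, ContDiff ℝ (⊤ : ℕ∞) (fun y => u1 y i) := fun i => contDiff_pi.mp hu1 i
  have hdivu : ContDiff ℝ (⊤ : ℕ∞) (fun y => vdiv u1 y) := by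
    simp only [vdiv]
    exact ContDiff.sum fun i _ => auxContDiffFderiv (hu1i i) _
  have hgsm : ContDiff ℝ (⊤ : ℕ∞) g := hν1.mul hdivu
  -- compact support helper
  have HCS : ∀ {f : (Fin d → ℝ) → ℝ}, Function.support f ⊆ Kc → HasCompactSupport f :=
    fun {f} h => HasCompactSupport.intro hKc fun x hx =>
      Function.notMem_support.mp fun m => hx (h m)
  -- supports of gradients
  have hgrad0 : ∀ {f : (Fin d → ℝ) → ℝ}, Function.support f ⊆ Kc →
      ∀ x ∉ Kc, ∀ i, grad f x i = 0 := by
    intro f h x hx i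
    exact Function.notMem_support.mp fun m => hx (auxSupportFderiv hKcl h (Pi.single i 1) m)
  have hp1K : ∀ x ∉ Kc, p1 x = 0 := fun x hx => Function.notMem_support.mp fun m => hx (hp1supp m)
  -- integrability helper
  have hInt : ∀ {F : (Fin d → ℝ) → ℝ}, Continuous F → Function.support F ⊆ Kc →
      Integrable F := fun {F} hc hs => hc.integrable_of_hasCompactSupport (HCS hs)
  -- continuity of gradient components
  have cgrad : ∀ {f : (Fin d → ℝ) → ℝ}, ContDiff ℝ (⊤ : ℕ∞) f → ∀ i,
      Continuous (fun x => grad f x i) := fun {f} hf i => (auxContDiffFderiv hf _).continuous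
  -- pointwise gradient of the update
  have hab : ∀ x i, grad p1 x i - grad p0 x i = grad ω1 x i - Ts * grad g x i := by
    intro x i
    have hfun : p1 = fun y => (ω1 y + p0 y) - Ts * g y := by
      funext y; rw [hpupd y, hg_def]; ring
    have hdo : DifferentiableAt ℝ ω1 x := hω1.differentiable (by norm_cast) x
    have hdp : DifferentiableAt ℝ p0 x := hp0.differentiable (by norm_cast) x
    have hdg : DifferentiableAt ℝ g x := hgsm.differentiable (by norm_cast) x
    have : fderiv ℝ p1 x = fderiv ℝ ω1 x + fderiv ℝ p0 x - Ts • fderiv ℝ g x := by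
      rw [hfun, fderiv_fun_sub (show DifferentiableAt ℝ (fun y => ω1 y + p0 y) x from hdo.add hdp) ((hdg.const_mul Ts)), fderiv_fun_add hdo hdp,
        fderiv_const_mul hdg]
    simp only [grad, this, ContinuousLinearMap.sub_apply, ContinuousLinearMap.add_apply,
      ContinuousLinearMap.smul_apply, smul_eq_mul]
    ring
  -- pointwise polarization identity
  have hpt : ∀ x, dot (grad p1 x) (grad p1 x) - dot (grad p0 x) (grad p0 x) +
      dot (fun i => grad p1 x i - grad p0 x i) (fun i => grad p1 x i - grad p0 x i) =
      2 * (dot (grad p1 x) (grad ω1 x) - Ts * dot (grad g x) (grad p1 x)) := by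
    intro x
    simp only [dot]
    simp only [dot, mul_sub, Finset.mul_sum, ← Finset.sum_sub_distrib, ← Finset.sum_add_distrib]
    refine Finset.sum_congr rfl fun i _ => ?_
    linear_combination 2 * grad p1 x i * hab x i
  -- continuity / vanishing of dot products of gradients
  have hdotc : ∀ {f h : (Fin d → ℝ) → ℝ}, ContDiff ℝ (⊤ : ℕ∞) f → ContDiff ℝ (⊤ : ℕ∞) h →
      Continuous (fun x => dot (grad f x) (grad h x)) := by
    intro f h hf hh
    simp only [dot]
    exact continuous_finset_sum _ fun i _ => (cgrad hf i).mul (cgrad hh i)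
  have hdots : ∀ {f h : (Fin d → ℝ) → ℝ}, Function.support f ⊆ Kc →
      ∀ x ∉ Kc, dot (grad f x) (grad h x) = 0 := by
    intro f h hf x hx
    simp only [dot]
    exact Finset.sum_eq_zero fun i _ => by rw [hgrad0 hf x hx i, zero_mul]
  have hdots' : ∀ {f h : (Fin d → ℝ) → ℝ}, Function.support h ⊆ Kc →
      ∀ x ∉ Kc, dot (grad f x) (grad h x) = 0 := by
    intro f h hh x hx
    simp only [dot]
    exact Finset.sum_eq_zero fun i _ => by rw [hgrad0 hh x hx i, mul_zero]
  have hInt' : ∀ {F : (Fin d → ℝ) → ℝ}, Continuous F → (∀ x ∉ Kc, F x = 0) →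
      Integrable F := fun {F} hc h0 => hInt hc (Function.support_subset_iff'.mpr h0)
  -- set-integral to full-integral conversion
  have hset : ∀ {F : (Fin d → ℝ) → ℝ}, (∀ x ∉ Kc, F x = 0) →
      (∫ x in Ω, F x) = ∫ x, F x := fun {F} h =>
    setIntegral_eq_integral_of_forall_compl_eq_zero fun x hx => h x fun hk => hx (hKΩ hk)
  simp only [l2vsq]
  rw [hset fun x hx => hdots hp1supp x hx, hset fun x hx => hdots hp0supp x hx,
    hset (F := fun x => dot (fun i => grad p1 x i - grad p0 x i)
      (fun i => grad p1 x i - grad p0 x i)) (fun x hx => by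
        simp only [dot]
        exact Finset.sum_eq_zero fun i _ => by
          rw [hgrad0 hp1supp x hx i, hgrad0 hp0supp x hx i]; ring),
    hset (F := fun x => p1 x * vdiv u1 x) (fun x hx => by simp only [hp1K x hx, zero_mul]),
    hset fun x hx => hdots' hp1supp x hx]
  -- integrability of the various integrands
  have hIA : Integrable fun x => dot (grad p1 x) (grad p1 x) :=
    hInt' (hdotc hp1 hp1) fun x hx => hdots hp1supp x hx
  have hIB : Integrable fun x => dot (grad p0 x) (grad p0 x) :=
    hInt' (hdotc hp0 hp0) fun x hx => hdots hp0supp x hx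
  have hIC : Integrable fun x => dot (fun i => grad p1 x i - grad p0 x i)
      (fun i => grad p1 x i - grad p0 x i) := by
    refine hInt' ?_ fun x hx => ?_
    · simp only [dot]
      exact continuous_finset_sum _ fun i _ =>
        ((cgrad hp1 i).sub (cgrad hp0 i)).mul ((cgrad hp1 i).sub (cgrad hp0 i))
    · simp only [dot]
      exact Finset.sum_eq_zero fun i _ => by
        rw [hgrad0 hp1supp x hx i, hgrad0 hp0supp x hx i]; ring
  have hIW : Integrable fun x => dot (grad p1 x) (grad ω1 x) :=
    hInt' (hdotc hp1 hω1) fun x hx => hdots hp1supp x hx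
  have hIH : Integrable fun x => dot (grad g x) (grad p1 x) :=
    hInt' (hdotc hgsm hp1) fun x hx => hdots' hp1supp x hx
  -- combine the three quadratic integrals using the polarization identity
  have key : (∫ x, dot (grad p1 x) (grad p1 x)) - (∫ x, dot (grad p0 x) (grad p0 x)) +
      (∫ x, dot (fun i => grad p1 x i - grad p0 x i) (fun i => grad p1 x i - grad p0 x i)) =
      2 * ((∫ x, dot (grad p1 x) (grad ω1 x)) - Ts * ∫ x, dot (grad g x) (grad p1 x)) := by
    have e1 : (∫ x, (dot (grad p1 x) (grad p1 x) - dot (grad p0 x) (grad p0 x) +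
            dot (fun i => grad p1 x i - grad p0 x i) (fun i => grad p1 x i - grad p0 x i)))
        = 2 * ((∫ x, dot (grad p1 x) (grad ω1 x)) -
            Ts * ∫ x, dot (grad g x) (grad p1 x)) := by
      calc (∫ x, (dot (grad p1 x) (grad p1 x) - dot (grad p0 x) (grad p0 x) +
              dot (fun i => grad p1 x i - grad p0 x i) (fun i => grad p1 x i - grad p0 x i)))
          = ∫ x, 2 * (dot (grad p1 x) (grad ω1 x) - Ts * dot (grad g x) (grad p1 x)) := by
            simp only [hpt]
        _ = 2 * ((∫ x, dot (grad p1 x) (grad ω1 x)) -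
              Ts * ∫ x, dot (grad g x) (grad p1 x)) := by
            rw [integral_const_mul, integral_sub hIW (hIH.const_mul Ts : Integrable fun x => Ts * dot (grad g x) (grad p1 x)), integral_const_mul]
    have hIAB : Integrable fun x =>
        dot (grad p1 x) (grad p1 x) - dot (grad p0 x) (grad p0 x) := hIA.sub hIB
    rw [← e1, integral_add hIAB hIC, integral_sub hIA hIB]
  -- integration by parts against the Poisson equation
  have hJω : (∫ x, dot (grad p1 x) (grad ω1 x)) =
      -(Ts * (3 * χ / (2 * δt))) * ∫ x, p1 x * vdiv u1 x := by
    simp only [dot, grad]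
    rw [integral_finset_sum (f := fun i x => fderiv ℝ p1 x (Pi.single i 1) * fderiv ℝ ω1 x (Pi.single i 1)) _ fun i _ => hInt'
      (((auxContDiffFderiv hp1 _).continuous).mul (auxContDiffFderiv hω1 _).continuous)
      (fun x hx => by
        simp only [show fderiv ℝ p1 x (Pi.single i 1) = 0 from hgrad0 hp1supp x hx i, zero_mul])]
    have h2 : ∀ i ∈ (Finset.univ : Finset (Fin d)),
        (∫ x, fderiv ℝ p1 x (Pi.single i 1) * fderiv ℝ ω1 x (Pi.single i 1)) =
        -∫ x, fderiv ℝ (fun y => fderiv ℝ ω1 y (Pi.single i 1)) x (Pi.single i 1) * p1 x :=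
      fun i _ => auxIbp hp1 (auxContDiffFderiv hω1 _) (HCS hp1supp)
        (HCS (auxSupportFderiv hKcl hω1supp _)) _
    rw [Finset.sum_congr rfl h2, Finset.sum_neg_distrib,
      ← integral_finset_sum (f := fun i x => fderiv ℝ (fun y => fderiv ℝ ω1 y (Pi.single i 1)) x (Pi.single i 1) * p1 x) _ fun i _ => hInt'
        (((auxContDiffFderiv (auxContDiffFderiv hω1 _) _).continuous).mul hp1.continuous)
        (fun x hx => by simp only [hp1K x hx, mul_zero])]
    have h3 : (fun x => ∑ i, fderiv ℝ (fun y => fderiv ℝ ω1 y (Pi.single i 1)) x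
        (Pi.single i 1) * p1 x) =
        fun x => (Ts * (3 * χ / (2 * δt))) * (p1 x * vdiv u1 x) := by
      funext x
      rw [← Finset.sum_mul]
      have hl := hpois x
      simp only [lap, vdiv, grad] at hl
      rw [hl]
      simp only [vdiv]
      ring
    rw [h3, integral_const_mul]
    ring
  rw [key, hJω]
  have h3χ : (3 : ℝ) * χ ≠ 0 := by positivity
  field_simp
  ring
end
end

section
/- Let d ≥ 1, Ω ⊂ ℝ^d open and bounded, and let φ, μ, p : ℝ × ℝ^d → ℝ, u : ℝ × ℝ^d → ℝ^d, ρ, ν : ℝ × ℝ^d → ℝ be smooth, with, for every t, the spatial supports of φ(t,·), μ(t,·), p(t,·), u(t,·) contained in a fixed compact subset of Ω, and let J : ℝ × ℝ^d → ℝ^d be a smooth vector field. Suppose at every (t,x): ρ(∂_t u + (u·∇)u) + (J·∇)u − ∇·(ν D(u)) + ∇p + φ∇μ = 0 and ∇·u = 0. Then for every t: ∫_Ω ρ ⟨∂_t u, u⟩ dx + (1/2)∫_Ω ν |D(u)|² dx + ∫_Ω φ ⟨∇μ, u⟩ dx + ∫_Ω ρ ⟨(u·∇)u, u⟩ dx +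 ∫_Ω ⟨(J·∇)u, u⟩ dx = 0. -/
open MeasureTheory

noncomputable section

section Aux

variable {d : ℕ}

lemma my_fderiv_zero_outside {K : Set (Fin d → ℝ)} (hKcl : IsClosed K)
    {f : (Fin d → ℝ) → ℝ} (h0 : ∀ x ∉ K, f x = 0) {x : Fin d → ℝ} (hx : x ∉ K) :
    fderiv ℝ f x = 0 := by
  have hts : tsupport f ⊆ K :=
    closure_minimal (Function.support_subset_iff'.mpr h0) hKcl
  exact fderiv_of_notMem_tsupport ℝ (fun h => hx (hts h))

lemma my_integ_of_supp {K : Set (Fin d → ℝ)} (hK : IsCompact K) {f : (Fin d → ℝ) → ℝ}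
    (hc : Continuous f) (h0 : ∀ x ∉ K, f x = 0) : Integrable f :=
  hc.integrable_of_hasCompactSupport (HasCompactSupport.intro hK h0)

lemma my_ibp {K : Set (Fin d → ℝ)} (hK : IsCompact K) {f g : (Fin d → ℝ) → ℝ}
    (hf : ContDiff ℝ (⊤ : ℕ∞) f) (hg : ContDiff ℝ (⊤ : ℕ∞) g)
    (h0 : ∀ x ∉ K, f x = 0) (v : Fin d → ℝ) :
    ∫ x, f x * fderiv ℝ g x v = - ∫ x, fderiv ℝ f x v * g x := by
  have hf0 : ∀ x ∉ K, fderiv ℝ f x v = 0 := fun x hx => by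
    rw [my_fderiv_zero_outside hK.isClosed h0 hx]; rfl
  have cf' : Continuous fun x => fderiv ℝ f x v :=
    ((hf.fderiv_right (m := (⊤:ℕ∞)) (by simp)).continuous).clm_apply continuous_const
  have cg' : Continuous fun x => fderiv ℝ g x v :=
    ((hg.fderiv_right (m := (⊤:ℕ∞)) (by simp)).continuous).clm_apply continuous_const
  exact integral_mul_fderiv_eq_neg_fderiv_mul_of_integrable
    (my_integ_of_supp hK (cf'.mul hg.continuous) (fun x hx => by rw [hf0 x hx, zero_mul]))
    (my_integ_of_supp hK (hf.continuous.mul cg') (fun x hx => by rw [h0 x hx, zero_mul]))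
    (my_integ_of_supp hK (hf.continuous.mul hg.continuous) (fun x hx => by rw [h0 x hx, zero_mul]))
    (fun x _ => hf.differentiable (by simp) x) (fun x _ => hg.differentiable (by simp) x)

lemma my_sum_sym (a : Fin d → Fin d → ℝ) :
    ∑ i, ∑ j, a i j * (a i j + a j i) = (1/2) * ∑ i, ∑ j, (a i j + a j i)^2 := by
  have h2 : (∑ i, ∑ j, a j i * (a j i + a i j)) = ∑ i, ∑ j, a i j * (a i j + a j i) :=
    Finset.sum_comm
  have h1 : ∑ i, ∑ j, (a i j + a j i)^2
      = (∑ i, ∑ j, a i j * (a i j + a j i)) + ∑ i, ∑ j, a j i * (a j i + a i j) := by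
    rw [← Finset.sum_add_distrib]
    refine Finset.sum_congr rfl fun i _ => ?_
    rw [← Finset.sum_add_distrib]
    exact Finset.sum_congr rfl fun j _ => by ring
  rw [h1, h2]; ring

lemma my_visc_point (c : ℝ) (a : Fin d → Fin d → ℝ) :
    ∑ i, ∑ j, a i j * (c * (a i j + a j i)) = (1/2) * (c * ∑ i, ∑ j, (a i j + a j i)^2) := by
  have l1 : ∑ i, ∑ j, a i j * (c * (a i j + a j i)) = c * ∑ i, ∑ j, a i j * (a i j + a j i) := by
    rw [Finset.mul_sum]
    refine Finset.sum_congr rfl fun i _ => ?_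
    rw [Finset.mul_sum]
    exact Finset.sum_congr rfl fun j _ => by ring
  rw [l1, my_sum_sym]; ring

end Aux

theorem stmt14 {d : ℕ} (hd : 1 ≤ d) (Ω : Set (Fin d → ℝ)) (hΩo : IsOpen Ω)
    (hΩb : Bornology.IsBounded Ω)
    (φ μ p : ℝ → (Fin d → ℝ) → ℝ) (u : ℝ → (Fin d → ℝ) → (Fin d → ℝ))
    (ρ ν : ℝ → (Fin d → ℝ) → ℝ) (J : ℝ → (Fin d → ℝ) → (Fin d → ℝ))
    (hφ : ContDiff ℝ (⊤ : ℕ∞) (fun q : ℝ × (Fin d → ℝ) => φ q.1 q.2))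
    (hμ : ContDiff ℝ (⊤ : ℕ∞) (fun q : ℝ × (Fin d → ℝ) => μ q.1 q.2))
    (hp : ContDiff ℝ (⊤ : ℕ∞) (fun q : ℝ × (Fin d → ℝ) => p q.1 q.2))
    (hu : ContDiff ℝ (⊤ : ℕ∞) (fun q : ℝ × (Fin d → ℝ) => u q.1 q.2))
    (hρ : ContDiff ℝ (⊤ : ℕ∞) (fun q : ℝ × (Fin d → ℝ) => ρ q.1 q.2))
    (hν : ContDiff ℝ (⊤ : ℕ∞) (fun q : ℝ × (Fin d → ℝ) => ν q.1 q.2))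
    (hJ : ContDiff ℝ (⊤ : ℕ∞) (fun q : ℝ × (Fin d → ℝ) => J q.1 q.2))
    (Kc : Set (Fin d → ℝ)) (hKc : IsCompact Kc) (hKΩ : Kc ⊆ Ω)
    (hφsupp : ∀ t, tsupport (φ t) ⊆ Kc) (hμsupp : ∀ t, tsupport (μ t) ⊆ Kc)
    (hpsupp : ∀ t, tsupport (p t) ⊆ Kc) (husupp : ∀ t, tsupport (u t) ⊆ Kc)
    (hmom : ∀ t x (i : Fin d),
      ρ t x * (deriv (fun s => u s x i) t + dirD (u t) (u t) x i) +
        dirD (J t) (u t) x i - divStrain (ν t) (u t) x i +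
        grad (p t) x i + φ t x * grad (μ t) x i = 0)
    (hdivfree : ∀ t x, vdiv (u t) x = 0) :
    ∀ t, (∫ x in Ω, ρ t x * dot (fun i => deriv (fun s => u s x i) t) (u t x)) +
      (1 / 2) * (∫ x in Ω, ν t x * strainSq (u t) x) +
      (∫ x in Ω, φ t x * dot (grad (μ t) x) (u t x)) +
      (∫ x in Ω, ρ t x * dot (dirD (u t) (u t) x) (u t x)) +
      (∫ x in Ω, dot (dirD (J t) (u t) x) (u t x)) = 0 := by
  intro t
  have hKcl := hKc.isClosed
  -- smoothness of time slices
  have hslice : ∀ (f : ℝ → (Fin d → ℝ) → ℝ),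
      ContDiff ℝ (⊤:ℕ∞) (fun q : ℝ × (Fin d → ℝ) => f q.1 q.2) → ContDiff ℝ (⊤:ℕ∞) (f t) :=
    fun f hf => hf.comp (contDiff_const.prodMk contDiff_id)
  have hpt := hslice p hp
  have hφt := hslice φ hφ
  have hμt := hslice μ hμ
  have hνt := hslice ν hν
  have hρt := hslice ρ hρ
  have hui : ∀ i, ContDiff ℝ (⊤:ℕ∞) (fun x => u t x i) := fun i =>
    (contDiff_pi.mp hu i).comp (contDiff_const.prodMk contDiff_id)
  have hJt : Continuous (J t) := (hJ.comp (contDiff_const.prodMk contDiff_id)).continuous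
  have cu : Continuous (u t) := continuous_pi fun i => (hui i).continuous
  -- vanishing of u and its derivatives outside Kc
  have hu0 : ∀ x ∉ Kc, ∀ i, u t x i = 0 := fun x hx i => by
    have h : u t x = 0 := image_eq_zero_of_notMem_tsupport (fun h => hx (husupp t h))
    rw [h]; rfl
  have hfd0 : ∀ x ∉ Kc, ∀ (i : Fin d) (v : Fin d → ℝ),
      fderiv ℝ (fun y => u t y i) x v = 0 := fun x hx i v => by
    rw [my_fderiv_zero_outside hKcl (fun y hy => hu0 y hy i) hx]; rfl
  have hdot0 : ∀ (v : Fin d → ℝ) (x : Fin d → ℝ), x ∉ Kc → dot v (u t x) = 0 :=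
    fun v x hx => Finset.sum_eq_zero fun i _ => by rw [hu0 x hx i, mul_zero]
  -- strain
  have hstr : ∀ i j, ContDiff ℝ (⊤:ℕ∞) (fun y => strain (u t) y i j) := fun i j =>
    (((hui i).fderiv_right (m := (⊤:ℕ∞)) (by simp)).clm_apply contDiff_const).add
      (((hui j).fderiv_right (m := (⊤:ℕ∞)) (by simp)).clm_apply contDiff_const)
  have hstr0 : ∀ x ∉ Kc, ∀ i j, strain (u t) x i j = 0 := fun x hx i j => by
    simp only [strain, hfd0 x hx, add_zero]
  -- continuity helpers
  have cfd' : ∀ {f : (Fin d → ℝ) → ℝ}, ContDiff ℝ (⊤:ℕ∞) f →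
      ∀ {V : (Fin d → ℝ) → (Fin d → ℝ)}, Continuous V →
      Continuous (fun x => fderiv ℝ f x (V x)) :=
    fun hf _ hV => ((hf.fderiv_right (m := (⊤:ℕ∞)) (by simp)).continuous).clm_apply hV
  have cdot : ∀ {v w : (Fin d → ℝ) → (Fin d → ℝ)}, Continuous v → Continuous w →
      Continuous fun x => dot (v x) (w x) := fun {v w} hv hw => by
    simp only [dot]
    exact continuous_finset_sum _ fun i _ =>
      ((continuous_apply i).comp hv).mul ((continuous_apply i).comp hw)
  have integ : ∀ {f : (Fin d → ℝ) → ℝ}, Continuous f → (∀ x ∉ Kc, f x = 0) → Integrable f :=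
    fun hc h0 => my_integ_of_supp hKc hc h0
  have hset : ∀ {f : (Fin d → ℝ) → ℝ}, (∀ x ∉ Kc, f x = 0) → ∫ x in Ω, f x = ∫ x, f x :=
    fun h0 => setIntegral_eq_integral_of_forall_compl_eq_zero
      (fun x hx => h0 x (fun h => hx (hKΩ h)))
  -- time derivative as joint fderiv
  have hF : ∀ i, ContDiff ℝ (⊤:ℕ∞) (fun q : ℝ × (Fin d → ℝ) => u q.1 q.2 i) :=
    fun i => contDiff_pi.mp hu i
  have hD : ∀ (x : Fin d → ℝ) (i : Fin d), deriv (fun s => u s x i) t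
      = fderiv ℝ (fun q : ℝ × (Fin d → ℝ) => u q.1 q.2 i) (t, x) (1, 0) := by
    intro x i
    have h1 : HasDerivAt (fun s : ℝ => (s, x)) ((1 : ℝ), (0 : Fin d → ℝ)) t :=
      (hasDerivAt_id t).prodMk (hasDerivAt_const t x)
    have h2 : HasFDerivAt (fun q : ℝ × (Fin d → ℝ) => u q.1 q.2 i)
        (fderiv ℝ (fun q : ℝ × (Fin d → ℝ) => u q.1 q.2 i) (t, x)) (t, x) :=
      (((hF i).differentiable (by simp)) (t, x)).hasFDerivAt
    exact (h2.comp_hasDerivAt t h1).deriv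
  have cDt : ∀ i, Continuous fun x =>
      fderiv ℝ (fun q : ℝ × (Fin d → ℝ) => u q.1 q.2 i) (t, x) ((1 : ℝ), (0 : Fin d → ℝ)) :=
    fun i => (((((hF i).fderiv_right (m := (⊤:ℕ∞)) (by simp)).continuous).comp
      (continuous_const.prodMk continuous_id))).clm_apply continuous_const
  -- continuity of the vector fields appearing in the integrands
  have cdirDu : Continuous fun x => dirD (u t) (u t) x :=
    continuous_pi fun i => cfd' (hui i) cu
  have cdirDJ : Continuous fun x => dirD (J t) (u t) x :=
    continuous_pi fun i => cfd' (hui i) hJt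
  have cdivS : Continuous fun x => divStrain (ν t) (u t) x :=
    continuous_pi fun i => continuous_finset_sum _ fun j _ =>
      cfd' (hνt.mul (hstr i j)) continuous_const
  have cgradp : Continuous fun x => grad (p t) x :=
    continuous_pi fun i => cfd' hpt continuous_const
  have cgradμ : Continuous fun x => grad (μ t) x :=
    continuous_pi fun i => cfd' hμt continuous_const
  -- pointwise identity from the momentum equation
  have point : ∀ x : Fin d → ℝ, ρ t x * dot (fun i => deriv (fun s => u s x i) t) (u t x)
      + ρ t x * dot (dirD (u t) (u t) x) (u t x)
      + dot (dirD (J t) (u t) x) (u t x)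
      - dot (divStrain (ν t) (u t) x) (u t x)
      + dot (grad (p t) x) (u t x)
      + φ t x * dot (grad (μ t) x) (u t x) = 0 := by
    intro x
    have hsum : ∑ i, (ρ t x * (deriv (fun s => u s x i) t + dirD (u t) (u t) x i) +
        dirD (J t) (u t) x i - divStrain (ν t) (u t) x i +
        grad (p t) x i + φ t x * grad (μ t) x i) * u t x i = 0 :=
      Finset.sum_eq_zero fun i _ => by rw [hmom t x i, zero_mul]
    rw [← hsum]
    simp only [dot, Finset.mul_sum, ← Finset.sum_add_distrib, ← Finset.sum_sub_distrib]
    exact Finset.sum_congr rfl fun i _ => by ring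
  -- replace set integrals over Ω by integrals over the whole space
  rw [hset (fun x hx => by rw [hdot0 _ x hx, mul_zero]),
      hset (fun x hx => by simp [strainSq, hstr0 x hx]),
      hset (fun x hx => by rw [hdot0 _ x hx, mul_zero]),
      hset (fun x hx => by rw [hdot0 _ x hx, mul_zero]),
      hset (fun x hx => hdot0 _ x hx)]
  -- name the integrands
  set I1 : (Fin d → ℝ) → ℝ :=
    fun x => ρ t x * dot (fun i => deriv (fun s => u s x i) t) (u t x) with hI1def
  set IV : (Fin d → ℝ) → ℝ := fun x => ν t x * strainSq (u t) x with hIVdef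
  set I3 : (Fin d → ℝ) → ℝ := fun x => φ t x * dot (grad (μ t) x) (u t x) with hI3def
  set I4 : (Fin d → ℝ) → ℝ := fun x => ρ t x * dot (dirD (u t) (u t) x) (u t x) with hI4def
  set I5 : (Fin d → ℝ) → ℝ := fun x => dot (dirD (J t) (u t) x) (u t x) with hI5def
  set IS : (Fin d → ℝ) → ℝ := fun x => dot (divStrain (ν t) (u t) x) (u t x) with hISdef
  set IP : (Fin d → ℝ) → ℝ := fun x => dot (grad (p t) x) (u t x) with hIPdef
  -- integrability
  have hi1 : Integrable I1 := by
    have he : I1 = fun x => ρ t x * dot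
        (fun i => fderiv ℝ (fun q : ℝ × (Fin d → ℝ) => u q.1 q.2 i) (t, x) (1, 0)) (u t x) := by
      funext x
      rw [hI1def]
      exact congrArg (fun z => ρ t x * dot z (u t x)) (funext fun i => hD x i)
    rw [he]
    exact integ ((hρt.continuous).mul (cdot (continuous_pi fun i => cDt i) cu))
      (fun x hx => by rw [hdot0 _ x hx, mul_zero])
  have hiV : Integrable IV := by
    rw [hIVdef]
    refine integ ((hνt.continuous).mul ?_) (fun x hx => by simp [strainSq, hstr0 x hx])
    exact continuous_finset_sum _ fun i _ => continuous_finset_sum _ fun j _ =>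
      ((hstr i j).continuous).pow 2
  have hi3 : Integrable I3 := by
    rw [hI3def]
    exact integ ((hφt.continuous).mul (cdot cgradμ cu))
      (fun x hx => by rw [hdot0 _ x hx, mul_zero])
  have hi4 : Integrable I4 := by
    rw [hI4def]
    exact integ ((hρt.continuous).mul (cdot cdirDu cu))
      (fun x hx => by rw [hdot0 _ x hx, mul_zero])
  have hi5 : Integrable I5 := by
    rw [hI5def]; exact integ (cdot cdirDJ cu) (fun x hx => hdot0 _ x hx)
  have hiS : Integrable IS := by
    rw [hISdef]; exact integ (cdot cdivS cu) (fun x hx => hdot0 _ x hx)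
  have hiP : Integrable IP := by
    rw [hIPdef]; exact integ (cdot cgradp cu) (fun x hx => hdot0 _ x hx)
  -- integral of the momentum identity
  have hcomb : (∫ x, I1 x) + (∫ x, I4 x) + (∫ x, I5 x) - (∫ x, IS x)
      + (∫ x, IP x) + (∫ x, I3 x) = 0 := by
    have h14 : Integrable (fun x => I1 x + I4 x) := hi1.add hi4
    have h145 : Integrable (fun x => I1 x + I4 x + I5 x) := h14.add hi5
    have h145S : Integrable (fun x => I1 x + I4 x + I5 x - IS x) := h145.sub hiS
    have h145SP : Integrable (fun x => I1 x + I4 x + I5 x - IS x + IP x) := h145S.add hiP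
    rw [← integral_add hi1 hi4, ← integral_add h14 hi5,
        ← integral_sub h145 hiS,
        ← integral_add h145S hiP,
        ← integral_add h145SP hi3]
    have hz : (fun x => I1 x + I4 x + I5 x - IS x + IP x + I3 x) = fun _ => (0:ℝ) := by
      funext x
      simp only [hI1def, hI3def, hI4def, hI5def, hISdef, hIPdef]
      exact point x
    rw [hz, integral_zero]
  -- pressure term vanishes
  have hIPz : ∫ x, IP x = 0 := by
    have e1 : IP = fun x => ∑ i, fderiv ℝ (p t) x (Pi.single i 1) * u t x i := by
      funext x; simp only [hIPdef, dot, grad]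
    rw [e1, integral_finset_sum _ (fun i _ =>
      integ (f := fun x => fderiv ℝ (p t) x (Pi.single i 1) * u t x i)
        ((cfd' hpt continuous_const).mul (hui i).continuous)
        (fun x hx => by rw [hu0 x hx i, mul_zero]))]
    have e2 : ∀ i : Fin d, ∫ x, fderiv ℝ (p t) x (Pi.single i 1) * u t x i
        = - ∫ x, fderiv ℝ (fun y => u t y i) x (Pi.single i 1) * p t x := fun i => by
      rw [show (fun x => fderiv ℝ (p t) x (Pi.single i 1) * u t x i)
          = fun x => u t x i * fderiv ℝ (p t) x (Pi.single i 1) from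
        funext fun x => mul_comm _ _]
      exact my_ibp hKc (hui i) hpt (fun x hx => hu0 x hx i) _
    rw [Finset.sum_congr rfl fun i _ => e2 i, Finset.sum_neg_distrib]
    rw [← integral_finset_sum _ (fun i _ =>
      integ (f := fun x => fderiv ℝ (fun y => u t y i) x (Pi.single i 1) * p t x)
        ((cfd' (hui i) continuous_const).mul hpt.continuous)
        (fun x hx => by rw [hfd0 x hx i, zero_mul]))]
    have e4 : (fun x => ∑ i, fderiv ℝ (fun y => u t y i) x (Pi.single i 1) * p t x)
        = fun _ => (0:ℝ) := by
      funext x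
      rw [← Finset.sum_mul]
      have h := hdivfree t x
      simp only [vdiv] at h
      rw [h, zero_mul]
    rw [e4, integral_zero, neg_zero]
  -- viscous term
  have hISz : ∫ x, IS x = -((1/2) * ∫ x, IV x) := by
    have e1 : IS = fun x => ∑ i, ∑ j,
        fderiv ℝ (fun y => ν t y * strain (u t) y i j) x (Pi.single j 1) * u t x i := by
      funext x; simp only [hISdef, dot, divStrain, Finset.sum_mul]
    have hint : ∀ i j : Fin d, Integrable fun x =>
        fderiv ℝ (fun y => ν t y * strain (u t) y i j) x (Pi.single j 1) * u t x i :=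
      fun i j => integ ((cfd' (hνt.mul (hstr i j)) continuous_const).mul (hui i).continuous)
        (fun x hx => by rw [hu0 x hx i, mul_zero])
    have hintb : ∀ i j : Fin d, Integrable fun x =>
        fderiv ℝ (fun y => u t y i) x (Pi.single j 1) * (ν t x * strain (u t) x i j) :=
      fun i j => integ ((cfd' (hui i) continuous_const).mul
          ((hνt.continuous).mul (hstr i j).continuous))
        (fun x hx => by rw [hfd0 x hx i, zero_mul])
    rw [e1, integral_finset_sum _ (fun i _ => integrable_finset_sum _ (fun j _ => hint i j))]
    rw [Finset.sum_congr rfl fun i _ => integral_finset_sum _ (fun j _ => hint i j)]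
    have e2 : ∀ i j : Fin d,
        ∫ x, fderiv ℝ (fun y => ν t y * strain (u t) y i j) x (Pi.single j 1) * u t x i
        = - ∫ x, fderiv ℝ (fun y => u t y i) x (Pi.single j 1)
            * (ν t x * strain (u t) x i j) := by
      intro i j
      rw [show (fun x => fderiv ℝ (fun y => ν t y * strain (u t) y i j) x (Pi.single j 1)
            * u t x i)
          = fun x => u t x i * fderiv ℝ (fun y => ν t y * strain (u t) y i j) x (Pi.single j 1)
        from funext fun x => mul_comm _ _]
      exact my_ibp hKc (hui i) (hνt.mul (hstr i j)) (fun x hx => hu0 x hx i) _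
    rw [Finset.sum_congr rfl fun i _ => Finset.sum_congr rfl fun j _ => e2 i j]
    have e3 : (fun x => ∑ i : Fin d, ∑ j : Fin d,
          fderiv ℝ (fun y => u t y i) x (Pi.single j 1) * (ν t x * strain (u t) x i j))
        = fun x => (1/2) * (ν t x * strainSq (u t) x) := by
      funext x
      simp only [strainSq, strain]
      exact my_visc_point (ν t x) (fun i j => fderiv ℝ (fun y => u t y i) x (Pi.single j 1))
    simp only [Finset.sum_neg_distrib]
    rw [Finset.sum_congr rfl fun i (_ : i ∈ (Finset.univ : Finset (Fin d))) =>
          (integral_finset_sum _ (fun j _ => hintb i j)).symm,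
        ← integral_finset_sum _ (fun i _ => integrable_finset_sum _ (fun j _ => hintb i j)),
        e3, integral_const_mul]
  linarith [hcomb, hIPz, hISz]
end
end
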